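/- arXiv:2410.15020 — 12 statements merged into one kernel-verified Lean document; each statement's English description precedes it below -/
import Mathlib

section
/- APPR push-operation runtime bound: Let z^{(0)} = e_s and p^{(0)} = 0, and for a sequence of vertices u_1, …, u_t update p^{(i)} = p^{(i-1)} + α z^{(i-1)}_{u_i} e_{u_i} and z^{(i)} = z^{(i-1)} - ((1+α)/2) z^{(i-1)}_{u_i} e_{u_i} + ((1-α)/2) z^{(i-1)}_{u_i} A D^{-1} e_{u_i}. If ε > 0 and every pushed vertex is active at its push time, i.e. z^{(i-1)}_{u_i} ≥ ε d_{u_i} for all i = 1, …, t, then every iterate satisfies z^{(i)} ≥ 0 and p^{(i)} ≥ 0 entrywise, ‖z^{(i)}‖_1 = ‖z^{(i-1)}‖_1 - α z^{(i-1)}_{u_i} for each i, and the total pushed volume satisfies Σ_{i=1}^{t} d_{u_i} ≤ 1/(α ε). -/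
/-- APPR push-operation runtime bound. -/
theorem appr_push_runtime_bound
    {V : Type*} [Fintype V] [DecidableEq V] [Nonempty V]
    (A : Matrix V V ℝ) (hsym : A.IsSymm)
    (h01 : ∀ u v, A u v = 0 ∨ A u v = 1)
    (hdiag : ∀ u, A u u = 0)
    (d : V → ℝ) (hd : ∀ u, d u = ∑ v, A u v)
    (hdpos : ∀ u, 0 < d u)
    (α : ℝ) (hα0 : 0 < α) (hα1 : α < 1)
    (s : V) (ε : ℝ) (hε : 0 < ε)
    (t : ℕ) (u : ℕ → V)
    (z p : ℕ → V → ℝ)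
    (hz0 : z 0 = Pi.single s 1)
    (hp0 : p 0 = 0)
    (hpupd : ∀ i < t, p (i + 1) = p i + (α * z i (u i)) • (Pi.single (u i) 1 : V → ℝ))
    (hzupd : ∀ i < t, z (i + 1) = z i - ((1 + α) / 2 * z i (u i)) • (Pi.single (u i) 1 : V → ℝ)
        + ((1 - α) / 2 * z i (u i)) • (fun v => A v (u i) / d (u i)))
    (hactive : ∀ i < t, ε * d (u i) ≤ z i (u i)) :
    (∀ i ≤ t, ∀ v, 0 ≤ z i v ∧ 0 ≤ p i v) ∧
    (∀ i < t, (∑ v, |z (i + 1) v|) = (∑ v, |z i v|) - α * z i (u i)) ∧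
    (∑ i ∈ Finset.range t, d (u i)) ≤ 1 / (α * ε) := by
  have hAnn : ∀ v w, 0 ≤ A v w := by
    intro v w; rcases h01 v w with h | h <;> simp [h]
  -- nonnegativity of z
  have hznn : ∀ i, i ≤ t → ∀ v, 0 ≤ z i v := by
    intro i
    induction i with
    | zero =>
      intro _ v
      rw [hz0, Pi.single_apply]
      split_ifs <;> norm_num
    | succ i ih =>
      intro hit v
      have hit' : i < t := lt_of_lt_of_le (Nat.lt_succ_self i) hit
      have hz := ih (le_of_lt hit')
      rw [hzupd i hit']
      simp only [Pi.add_apply, Pi.sub_apply, Pi.smul_apply, smul_eq_mul]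
      rcases eq_or_ne v (u i) with h | h
      · subst h
        rw [Pi.single_eq_same, hdiag]
        have h1 := hz (u i)
        have h2 : (0:ℝ) ≤ (1 - α) / 2 * z i (u i) := by
          apply mul_nonneg _ h1; linarith
        rw [zero_div, mul_zero]
        nlinarith
      · rw [Pi.single_eq_of_ne h, mul_zero]
        have h1 := hz v
        have h2 : (0:ℝ) ≤ (1 - α) / 2 * z i (u i) * (A v (u i) / d (u i)) := by
          apply mul_nonneg (mul_nonneg (by linarith) (hz (u i)))
          exact div_nonneg (hAnn v (u i)) (le_of_lt (hdpos (u i)))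
        linarith
  -- nonnegativity of p
  have hpnn : ∀ i, i ≤ t → ∀ v, 0 ≤ p i v := by
    intro i
    induction i with
    | zero => intro _ v; rw [hp0]; simp
    | succ i ih =>
      intro hit v
      have hit' : i < t := lt_of_lt_of_le (Nat.lt_succ_self i) hit
      rw [hpupd i hit']
      simp only [Pi.add_apply, Pi.smul_apply, smul_eq_mul]
      have h1 := ih (le_of_lt hit') v
      have h2 : (0:ℝ) ≤ α * z i (u i) * (Pi.single (u i) 1 : V → ℝ) v := by
        apply mul_nonneg (mul_nonneg (le_of_lt hα0) (hznn i (le_of_lt hit') (u i)))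
        rcases eq_or_ne v (u i) with h | h
        · subst h; simp
        · rw [Pi.single_eq_of_ne h]
      linarith
  -- column sums equal degree
  have hcol : ∀ w, (∑ v, A v w) = d w := by
    intro w
    rw [hd w]
    exact Finset.sum_congr rfl fun v _ => hsym.apply w v
  -- sum recursion (without abs)
  have hsumrec : ∀ i < t, (∑ v, z (i + 1) v) = (∑ v, z i v) - α * z i (u i) := by
    intro i hit
    rw [hzupd i hit]
    simp only [Pi.add_apply, Pi.sub_apply, Pi.smul_apply, smul_eq_mul]
    rw [Finset.sum_add_distrib, Finset.sum_sub_distrib, ← Finset.mul_sum, ← Finset.mul_sum]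
    rw [Finset.sum_pi_single']
    simp only [Finset.mem_univ, if_true]
    have : (∑ v, A v (u i) / d (u i)) = 1 := by
      rw [← Finset.sum_div, hcol, div_self (ne_of_gt (hdpos (u i)))]
    rw [this]
    ring
  -- abs version
  have habs : ∀ i < t, (∑ v, |z (i + 1) v|) = (∑ v, |z i v|) - α * z i (u i) := by
    intro i hit
    have h1 : (∑ v, |z (i + 1) v|) = ∑ v, z (i + 1) v :=
      Finset.sum_congr rfl fun v _ => abs_of_nonneg (hznn (i + 1) hit v)
    have h2 : (∑ v, |z i v|) = ∑ v, z i v :=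
      Finset.sum_congr rfl fun v _ => abs_of_nonneg (hznn i (le_of_lt hit) v)
    rw [h1, h2, hsumrec i hit]
  refine ⟨fun i hi v => ⟨hznn i hi v, hpnn i hi v⟩, habs, ?_⟩
  -- telescoping
  have htel : ∀ k, k ≤ t → (∑ i ∈ Finset.range k, α * z i (u i)) + (∑ v, z k v) = ∑ v, z 0 v := by
    intro k
    induction k with
    | zero => intro _; simp
    | succ k ih =>
      intro hk
      have hk' : k < t := lt_of_lt_of_le (Nat.lt_succ_self k) hk
      rw [Finset.sum_range_succ, hsumrec k hk']
      have := ih (le_of_lt hk')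
      linarith
  have hz0sum : (∑ v, z 0 v) = 1 := by
    rw [hz0, Finset.sum_pi_single']
    simp
  have hzt : 0 ≤ ∑ v, z t v := Finset.sum_nonneg fun v _ => hznn t le_rfl v
  have hkey : (∑ i ∈ Finset.range t, α * z i (u i)) ≤ 1 := by
    have := htel t le_rfl
    rw [hz0sum] at this
    linarith
  have hlow : (α * ε) * (∑ i ∈ Finset.range t, d (u i)) ≤ ∑ i ∈ Finset.range t, α * z i (u i) := by
    rw [Finset.mul_sum]
    apply Finset.sum_le_sum
    intro i hi
    have hit := Finset.mem_range.mp hi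
    have := hactive i hit
    have : α * (ε * d (u i)) ≤ α * z i (u i) := by
      apply mul_le_mul_of_nonneg_left this (le_of_lt hα0)
    linarith [this]
  have hαε : 0 < α * ε := mul_pos hα0 hε
  rw [le_div_iff₀ hαε]
  calc (∑ i ∈ Finset.range t, d (u i)) * (α * ε)
      = (α * ε) * (∑ i ∈ Finset.range t, d (u i)) := by ring
    _ ≤ ∑ i ∈ Finset.range t, α * z i (u i) := hlow
    _ ≤ 1 := hkey
end

section
/- Accuracy of APPR-type estimates: The matrix M = ((1+α)/2) I - ((1-α)/2) A D^{-1} is invertible, and the matrix Π = α M^{-1} satisfies the following: for every entrywise-nonnegative vector z with z_v ≤ ε d_v for all vertices v, every entry of Π z satisfies (Π z)_u ≤ ε d_u; in particular ‖D^{-1} Π z‖_∞ ≤ ε. -/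
/-- Accuracy of APPR-type estimates. -/
theorem appr_estimate_accuracy
    {V : Type*} [Fintype V] [DecidableEq V] [Nonempty V]
    (A : Matrix V V ℝ) (hsym : A.IsSymm)
    (h01 : ∀ u v, A u v = 0 ∨ A u v = 1)
    (hdiag : ∀ u, A u u = 0)
    (d : V → ℝ) (hd : ∀ u, d u = ∑ v, A u v)
    (hdpos : ∀ u, 0 < d u)
    (α : ℝ) (hα0 : 0 < α) (hα1 : α < 1)
    (ε : ℝ) (hε : 0 < ε)
    (M : Matrix V V ℝ)
    (hM : M = ((1 + α) / 2) • (1 : Matrix V V ℝ)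
        - ((1 - α) / 2) • (A * Matrix.diagonal fun v => (d v)⁻¹))
    (Pmat : Matrix V V ℝ) (hPmat : Pmat = α • M⁻¹) :
    IsUnit M ∧
    ∀ z : V → ℝ, (∀ v, 0 ≤ z v) → (∀ v, z v ≤ ε * d v) →
      (∀ u, Pmat.mulVec z u ≤ ε * d u) ∧ ‖fun u => Pmat.mulVec z u / d u‖ ≤ ε := by
  have hA0 : ∀ u v, 0 ≤ A u v := by
    intro u v; rcases h01 u v with h | h <;> simp [h]
  have hMu : ∀ (y : V → ℝ) (u : V), M.mulVec y u
      = ((1 + α) / 2) * y u - ((1 - α) / 2) * ∑ v, A u v * (y v / d v) := by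
    intro y u
    rw [hM]
    simp only [Matrix.mulVec, dotProduct, Matrix.sub_apply, Matrix.smul_apply,
      Matrix.one_apply, Matrix.mul_diagonal, smul_eq_mul, sub_mul,
      Finset.sum_sub_distrib, mul_ite, mul_one, mul_zero,
      Finset.sum_ite_eq', Finset.mem_univ, if_true]
    congr 1
    · rw [Finset.sum_eq_single u]
      · simp
      · intro b _ h
        rw [if_neg fun he => h he.symm, zero_mul]
      · intro h
        exact absurd (Finset.mem_univ u) h
    · rw [Finset.mul_sum]
      apply Finset.sum_congr rfl
      intro v _
      rw [div_eq_inv_mul]; ring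
  -- key inequality: at a weighted maximizer, α * y u ≤ (M y) u
  have key : ∀ (y : V → ℝ) (u : V), (∀ v, y v / d v ≤ y u / d u) →
      α * y u ≤ M.mulVec y u := by
    intro y u hmax
    have hsum : ∑ v, A u v * (y v / d v) ≤ y u := by
      calc ∑ v, A u v * (y v / d v) ≤ ∑ v, A u v * (y u / d u) :=
            Finset.sum_le_sum fun v _ => mul_le_mul_of_nonneg_left (hmax v) (hA0 u v)
        _ = (∑ v, A u v) * (y u / d u) := by rw [Finset.sum_mul]
        _ = d u * (y u / d u) := by rw [← hd]
        _ = y u := by rw [mul_comm, div_mul_cancel₀ _ (hdpos u).ne']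
    rw [hMu]
    have hc : (0:ℝ) ≤ (1 - α) / 2 := by linarith
    nlinarith [mul_le_mul_of_nonneg_left hsum hc]
  -- going to maximizer / minimizer
  have keymax : ∀ y : V → ℝ, ∃ u, (∀ v, y v / d v ≤ y u / d u) ∧ α * y u ≤ M.mulVec y u := by
    intro y
    obtain ⟨u, -, hu⟩ := Finset.exists_max_image Finset.univ (fun v => y v / d v)
      ⟨Classical.arbitrary V, Finset.mem_univ _⟩
    exact ⟨u, fun v => hu v (Finset.mem_univ v), key y u fun v => hu v (Finset.mem_univ v)⟩
  have keymin : ∀ y : V → ℝ, ∃ u, (∀ v, y u / d u ≤ y v / d v) ∧ M.mulVec y u ≤ α * y u := by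
    intro y
    obtain ⟨u, hu1, hu2⟩ := keymax (-y)
    refine ⟨u, fun v => ?_, ?_⟩
    · have := hu1 v
      simp only [Pi.neg_apply, neg_div] at this
      linarith
    · have : M.mulVec (-y) = -(M.mulVec y) := by
        simp [Matrix.mulVec_neg]
      rw [this] at hu2
      simp only [Pi.neg_apply] at hu2
      linarith
  -- injectivity + unit
  have hker : ∀ y : V → ℝ, M.mulVec y = 0 → y = 0 := by
    intro y hy
    obtain ⟨u0, hu0, h1⟩ := keymax y
    obtain ⟨u1, hu1, h2⟩ := keymin y
    rw [hy] at h1 h2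
    simp only [Pi.zero_apply] at h1 h2
    have hy0 : y u0 ≤ 0 := by nlinarith
    have hy1 : 0 ≤ y u1 := by nlinarith
    funext v
    have ha := hu0 v
    have hb := hu1 v
    have hd0 := hdpos u0
    have hd1 := hdpos u1
    have hdv := hdpos v
    have h3 : y v / d v ≤ 0 := ha.trans (div_nonpos_iff.mpr (Or.inr ⟨hy0, hd0.le⟩))
    have h4 : 0 ≤ y v / d v := le_trans (div_nonneg hy1 hd1.le) hb
    have : y v / d v = 0 := le_antisymm h3 h4
    have := (div_eq_zero_iff.mp this).resolve_right (ne_of_gt hdv)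
    simpa using this
  have hUnit : IsUnit M := by
    rw [← Matrix.mulVec_injective_iff_isUnit]
    intro a b hab
    have : M.mulVec (a - b) = 0 := by
      rw [Matrix.mulVec_sub, hab, sub_self]
    have := hker _ this
    exact sub_eq_zero.mp this
  refine ⟨hUnit, ?_⟩
  intro z hz0 hzε
  have hMinv : M * M⁻¹ = 1 := Matrix.mul_nonsing_inv M (Matrix.isUnit_iff_isUnit_det M |>.mp hUnit)
  set y := M⁻¹.mulVec z with hy
  have hMy : M.mulVec y = z := by
    rw [hy, Matrix.mulVec_mulVec, hMinv, Matrix.one_mulVec]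
  have hPz : ∀ u, Pmat.mulVec z u = α * y u := by
    intro u
    rw [hPmat, Matrix.smul_mulVec]
    simp [hy]
  -- upper bound
  obtain ⟨u0, hu0, h1⟩ := keymax y
  obtain ⟨u1, hu1, h2⟩ := keymin y
  rw [hMy] at h1 h2
  have hd0 := hdpos u0
  have hd1 := hdpos u1
  have hupper : ∀ u, α * y u ≤ ε * d u := by
    intro u
    have hzu0 := hzε u0
    have htop : y u0 / d u0 ≤ ε / α := by
      rw [div_le_div_iff₀ hd0 hα0]
      nlinarith
    have := (hu0 u).trans htop
    have hdu := hdpos u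
    rw [div_le_div_iff₀ hdu hα0] at this
    nlinarith
  have hlower : ∀ u, 0 ≤ y u := by
    intro u
    have hz1 := hz0 u1
    have hbot : 0 ≤ y u1 := by nlinarith
    have := (div_nonneg hbot hd1.le).trans (hu1 u)
    have hdu := hdpos u
    exact (div_nonneg_iff.mp this).elim (fun h => h.1)
      (fun h => absurd hdu (not_lt.mpr h.2))
  refine ⟨fun u => by rw [hPz u]; exact hupper u, ?_⟩
  rw [pi_norm_le_iff_of_nonneg hε.le]
  intro u
  rw [Real.norm_eq_abs, abs_le]
  have hdu := hdpos u
  constructor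
  · have : 0 ≤ Pmat.mulVec z u / d u := by
      rw [hPz u]
      exact div_nonneg (mul_nonneg hα0.le (hlower u)) hdu.le
    linarith
  · rw [hPz u, div_le_iff₀ hdu]
    nlinarith [hupper u]
end

section
/- Runtime bound of LocSOR with ω = 1: Let b = (2α/(1+α)) D^{-1/2} e_s, x^{(0)} = 0, r^{(0)} = b, and for a sequence of vertices u_1, …, u_N update r^{(i)} = r^{(i-1)} - r^{(i-1)}_{u_i} e_{u_i} + ((1-α)/(1+α)) r^{(i-1)}_{u_i} W e_{u_i}. If ε > 0 and every pushed vertex is active at its push time, i.e. √(d_{u_i}) · r^{(i-1)}_{u_i} ≥ (2αε/(1+α)) d_{u_i} for all i = 1, …, N, then the total pushed volume satisfies Σ_{i=1}^{N} d_{u_i} ≤ (1+α)/(2αε). -/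
/-- Runtime bound of LocSOR with ω = 1. -/
theorem locSOR_runtime_bound
    {V : Type*} [Fintype V] [DecidableEq V] [Nonempty V]
    (A : Matrix V V ℝ) (hsym : A.IsSymm)
    (h01 : ∀ u v, A u v = 0 ∨ A u v = 1)
    (hdiag : ∀ u, A u u = 0)
    (d : V → ℝ) (hd : ∀ u, d u = ∑ v, A u v)
    (hdpos : ∀ u, 0 < d u)
    (α : ℝ) (hα0 : 0 < α) (hα1 : α < 1)
    (W : Matrix V V ℝ)
    (hW : ∀ v w, W v w = A v w / (Real.sqrt (d v) * Real.sqrt (d w)))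
    (s : V) (ε : ℝ) (hε : 0 < ε)
    (b : V → ℝ)
    (hb : b = fun v => (2 * α / (1 + α)) * ((Pi.single s 1 : V → ℝ) v / Real.sqrt (d v)))
    (N : ℕ) (u : ℕ → V)
    (x r : ℕ → V → ℝ)
    (hx0 : x 0 = 0) (hr0 : r 0 = b)
    (hrupd : ∀ i < N, r (i + 1) = r i - (r i (u i)) • (Pi.single (u i) 1 : V → ℝ)
        + ((1 - α) / (1 + α) * r i (u i)) • W.mulVec (Pi.single (u i) 1))
    (hactive : ∀ i < N, (2 * α * ε / (1 + α)) * d (u i) ≤ Real.sqrt (d (u i)) * r i (u i)) :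
    (∑ i ∈ Finset.range N, d (u i)) ≤ (1 + α) / (2 * α * ε) := by
  have h1α : (0:ℝ) < 1 + α := by linarith
  have hsq : ∀ v, 0 < Real.sqrt (d v) := fun v => Real.sqrt_pos.mpr (hdpos v)
  have hAnn : ∀ v w, 0 ≤ A v w := by
    intro v w; rcases h01 v w with h | h <;> simp [h]
  have hWnn : ∀ v w, 0 ≤ W v w := by
    intro v w; rw [hW]
    exact div_nonneg (hAnn v w) (by positivity)
  have hc : (0:ℝ) ≤ (1 - α) / (1 + α) := by
    apply div_nonneg <;> linarith
  -- mulVec of a single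
  have hmv : ∀ (w v : V), W.mulVec (Pi.single w 1) v = W v w := by
    intro w v
    simp [Matrix.mulVec, dotProduct, Pi.single_apply, mul_ite, Finset.sum_ite_eq']
  -- residual at pushed vertex is nonnegative
  have hru : ∀ i < N, 0 ≤ r i (u i) := by
    intro i hi
    have h1 := hactive i hi
    have h2 : 0 < (2 * α * ε / (1 + α)) * d (u i) :=
      mul_pos (div_pos (by positivity) h1α) (hdpos _)
    nlinarith [hsq (u i)]
  -- residuals stay nonnegative
  have hrnn : ∀ i ≤ N, ∀ v, 0 ≤ r i v := by
    intro i
    induction i with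
    | zero =>
      intro _ v
      rw [hr0, hb]
      have : (0:ℝ) ≤ (Pi.single s 1 : V → ℝ) v := by
        rw [Pi.single_apply]
        split <;> norm_num
      positivity
    | succ i ih =>
      intro hi v
      have hiN : i < N := hi
      have ih' := ih (le_of_lt hiN)
      rw [hrupd i hiN]
      simp only [Pi.add_apply, Pi.sub_apply, Pi.smul_apply, smul_eq_mul, hmv]
      rcases eq_or_ne v (u i) with h | h
      · have hW0 : W (u i) (u i) = 0 := by rw [hW, hdiag]; simp
        rw [h, Pi.single_eq_same, hW0]
        simp
      · rw [Pi.single_apply, if_neg h]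
        have := mul_nonneg (mul_nonneg hc (hru i hiN)) (hWnn v (u i))
        have := ih' v
        nlinarith
  -- column sums of √d ∘ W
  have hcol : ∀ w, ∑ v, Real.sqrt (d v) * W v w = Real.sqrt (d w) := by
    intro w
    have hterm : ∀ v, Real.sqrt (d v) * W v w = A v w / Real.sqrt (d w) := by
      intro v
      rw [hW, ← mul_div_assoc, mul_div_mul_left _ _ (hsq v).ne']
    rw [Finset.sum_congr rfl fun v _ => hterm v, ← Finset.sum_div]
    have hAw : ∑ v, A v w = d w := by
      rw [hd w]
      exact Finset.sum_congr rfl fun v _ => by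
        exact (hsym.apply v w).symm
    rw [hAw, Real.div_sqrt]
  -- potential step
  have hstep : ∀ i < N, (∑ v, Real.sqrt (d v) * r (i+1) v)
      = (∑ v, Real.sqrt (d v) * r i v)
        - (2 * α / (1 + α)) * (Real.sqrt (d (u i)) * r i (u i)) := by
    intro i hi
    rw [hrupd i hi]
    simp only [Pi.add_apply, Pi.sub_apply, Pi.smul_apply, smul_eq_mul, hmv]
    have e1 : ∀ v, Real.sqrt (d v) * (r i v - r i (u i) * (Pi.single (u i) 1 : V → ℝ) v
        + (1 - α) / (1 + α) * r i (u i) * W v (u i))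
        = Real.sqrt (d v) * r i v
          - r i (u i) * (Real.sqrt (d v) * (Pi.single (u i) 1 : V → ℝ) v)
          + (1 - α) / (1 + α) * r i (u i) * (Real.sqrt (d v) * W v (u i)) := by
      intro v; ring
    rw [Finset.sum_congr rfl fun v _ => e1 v]
    rw [Finset.sum_add_distrib, Finset.sum_sub_distrib, ← Finset.mul_sum, ← Finset.mul_sum,
      hcol]
    have e2 : ∑ v, Real.sqrt (d v) * (Pi.single (u i) 1 : V → ℝ) v = Real.sqrt (d (u i)) := by
      simp [Pi.single_apply, mul_ite, Finset.sum_ite_eq']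
    rw [e2]
    field_simp
    ring
  -- telescoping
  have htel : ∀ n ≤ N, (∑ v, Real.sqrt (d v) * r n v)
      = (∑ v, Real.sqrt (d v) * r 0 v)
        - ∑ i ∈ Finset.range n, (2 * α / (1 + α)) * (Real.sqrt (d (u i)) * r i (u i)) := by
    intro n
    induction n with
    | zero => simp
    | succ n ih =>
      intro hn
      rw [hstep n hn, ih (le_of_lt hn), Finset.sum_range_succ]
      ring
  -- initial potential
  have hΦ0 : (∑ v, Real.sqrt (d v) * r 0 v) = 2 * α / (1 + α) := by
    rw [hr0, hb]
    have e : ∀ v, Real.sqrt (d v) * ((2 * α / (1 + α)) * ((Pi.single s 1 : V → ℝ) v / Real.sqrt (d v)))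
        = (2 * α / (1 + α)) * (Pi.single s 1 : V → ℝ) v := by
      intro v
      rw [mul_comm, mul_assoc, div_mul_cancel₀ _ (hsq v).ne']
    rw [Finset.sum_congr rfl fun v _ => e v, ← Finset.mul_sum]
    simp
  -- final potential nonneg
  have hΦN : 0 ≤ ∑ v, Real.sqrt (d v) * r N v :=
    Finset.sum_nonneg fun v _ => mul_nonneg (le_of_lt (hsq v)) (hrnn N le_rfl v)
  have hkey : ∑ i ∈ Finset.range N, (2 * α / (1 + α)) * ((2 * α * ε / (1 + α)) * d (u i))
      ≤ 2 * α / (1 + α) := by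
    have h1 := htel N le_rfl
    rw [hΦ0] at h1
    have h2 : ∑ i ∈ Finset.range N, (2 * α / (1 + α)) * ((2 * α * ε / (1 + α)) * d (u i))
        ≤ ∑ i ∈ Finset.range N, (2 * α / (1 + α)) * (Real.sqrt (d (u i)) * r i (u i)) := by
      apply Finset.sum_le_sum
      intro i hi
      have hi' : i < N := Finset.mem_range.mp hi
      exact mul_le_mul_of_nonneg_left (hactive i hi') (by positivity)
    linarith
  have hfac : ∑ i ∈ Finset.range N, (2 * α / (1 + α)) * ((2 * α * ε / (1 + α)) * d (u i))
      = (2 * α / (1 + α)) * (2 * α * ε / (1 + α)) * ∑ i ∈ Finset.range N, d (u i) := by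
    rw [Finset.mul_sum]
    exact Finset.sum_congr rfl fun i _ => by ring
  rw [hfac] at hkey
  have e1 : (1 + α)^2 * (2 * α / (1 + α) * (2 * α * ε / (1 + α)) * ∑ i ∈ Finset.range N, d (u i))
      = 4 * α^2 * ε * ∑ i ∈ Finset.range N, d (u i) := by
    field_simp
    ring
  have e2 : (1 + α)^2 * (2 * α / (1 + α)) = 2 * α * (1 + α) := by
    field_simp
  have h2 : 4 * α^2 * ε * (∑ i ∈ Finset.range N, d (u i)) ≤ 2 * α * (1 + α) := by
    have := mul_le_mul_of_nonneg_left hkey (sq_nonneg (1 + α))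
    rw [← e1, ← e2]
    exact this
  rw [le_div_iff₀ (by positivity)]
  nlinarith [h2, hα0]
end

section
/- Properties of local gradient descent (LocGD): Let Q = I - ((1-α)/(1+α)) W, let b ≥ 0 entrywise, x^{(0)} = 0, r^{(0)} = b, and for subsets S_t ⊆ V define x^{(t+1)} = x^{(t)} + r^{(t)}_{S_t} and r^{(t+1)} = r^{(t)} - Q r^{(t)}_{S_t}. Then x^{(t)} ≥ 0 and r^{(t)} ≥ 0 entrywise for all t ≥ 0, and whenever ‖D^{1/2} r^{(t)}‖_1 > 0 one has ‖D^{1/2} r^{(t+1)}‖_1 = (1 - (2α/(1+α)) γ_t) · ‖D^{1/2} r^{(t)}‖_1, where γ_t = ‖D^{1/2} r^{(t)}_{S_t}‖_1 / ‖D^{1/2} r^{(t)}‖_1; in particular ‖D^{1/2} r^{(t)}‖_1 is nonincreasing in t. -/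
/-- Properties of local gradient descent (LocGD). -/
theorem locGD_properties
    {V : Type*} [Fintype V] [DecidableEq V] [Nonempty V]
    (A : Matrix V V ℝ) (hsym : A.IsSymm)
    (h01 : ∀ u v, A u v = 0 ∨ A u v = 1)
    (hdiag : ∀ u, A u u = 0)
    (d : V → ℝ) (hd : ∀ u, d u = ∑ v, A u v)
    (hdpos : ∀ u, 0 < d u)
    (α : ℝ) (hα0 : 0 < α) (hα1 : α < 1)
    (W : Matrix V V ℝ)
    (hW : ∀ v w, W v w = A v w / (Real.sqrt (d v) * Real.sqrt (d w)))
    (Q : Matrix V V ℝ) (hQ : Q = 1 - ((1 - α) / (1 + α)) • W)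
    (b : V → ℝ) (hb : ∀ v, 0 ≤ b v)
    (S : ℕ → Finset V)
    (x r : ℕ → V → ℝ)
    (hx0 : x 0 = 0) (hr0 : r 0 = b)
    (hxupd : ∀ t, x (t + 1) = x t + fun v => if v ∈ S t then r t v else 0)
    (hrupd : ∀ t, r (t + 1) = r t - Q.mulVec fun v => if v ∈ S t then r t v else 0) :
    (∀ t, ∀ v, 0 ≤ x t v ∧ 0 ≤ r t v) ∧
    (∀ t, 0 < (∑ v, |Real.sqrt (d v) * r t v|) →
      (∑ v, |Real.sqrt (d v) * r (t + 1) v|) =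
        (1 - (2 * α / (1 + α)) *
          ((∑ v, |Real.sqrt (d v) * (if v ∈ S t then r t v else 0)|) /
            (∑ v, |Real.sqrt (d v) * r t v|))) * (∑ v, |Real.sqrt (d v) * r t v|)) ∧
    (∀ t, (∑ v, |Real.sqrt (d v) * r (t + 1) v|) ≤ ∑ v, |Real.sqrt (d v) * r t v|) := by
  have hαs : (0:ℝ) < 1 + α := by linarith
  set c : ℝ := (1 - α) / (1 + α) with hc
  have hc0 : 0 ≤ c := by
    apply div_nonneg <;> linarith
  have hAnn : ∀ u v, 0 ≤ A u v := by
    intro u v; rcases h01 u v with h | h <;> rw [h] <;> norm_num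
  have hWnn : ∀ u v, 0 ≤ W u v := by
    intro u v; rw [hW]
    apply div_nonneg (hAnn u v)
    positivity
  have hsq : ∀ v, (0:ℝ) < Real.sqrt (d v) := fun v => Real.sqrt_pos.mpr (hdpos v)
  -- the mulVec formula
  have hmv : ∀ (f : V → ℝ) v, Q.mulVec f v = f v - c * ∑ w, W v w * f w := by
    intro f v
    rw [hQ]
    simp only [Matrix.mulVec, dotProduct, Matrix.sub_apply, Matrix.smul_apply,
      Matrix.one_apply, smul_eq_mul, sub_mul, Finset.sum_sub_distrib, ite_mul, one_mul,
      zero_mul, Finset.sum_ite_eq, Finset.mem_univ, if_true, Finset.mul_sum, mul_assoc]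
  -- nonnegativity of r
  have hrnn : ∀ t v, 0 ≤ r t v := by
    intro t
    induction t with
    | zero => intro v; rw [hr0]; exact hb v
    | succ t ih =>
      intro v
      rw [hrupd t]
      simp only [Pi.sub_apply, hmv]
      have h1 : 0 ≤ ∑ w, W v w * (if w ∈ S t then r t w else 0) := by
        apply Finset.sum_nonneg
        intro w _
        apply mul_nonneg (hWnn v w)
        split
        · exact ih w
        · exact le_rfl
      have h2 : 0 ≤ r t v - (if v ∈ S t then r t v else 0) := by
        split
        · simp
        · simpa using ih v
      nlinarith [mul_nonneg hc0 h1]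
  have hxnn : ∀ t v, 0 ≤ x t v := by
    intro t
    induction t with
    | zero => intro v; rw [hx0]; exact le_rfl
    | succ t ih =>
      intro v
      rw [hxupd t]
      have h3 : 0 ≤ (if v ∈ S t then r t v else 0) := by
        split
        · exact hrnn t v
        · exact le_rfl
      simpa using add_nonneg (ih v) h3
  -- column sums of W weighted by sqrt d
  have hcol : ∀ w, ∑ v, Real.sqrt (d v) * W v w = Real.sqrt (d w) := by
    intro w
    have h4 : ∀ v, Real.sqrt (d v) * W v w = A w v / Real.sqrt (d w) := by
      intro v
      rw [hW]
      have hAvw : A v w = A w v := by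
        have := congrFun (congrFun hsym w) v
        simpa [Matrix.transpose_apply] using this
      rw [hAvw, mul_div_assoc']
      exact mul_div_mul_left _ _ (hsq v).ne'
    rw [Finset.sum_congr rfl fun v _ => h4 v, ← Finset.sum_div, ← hd w,
      Real.div_sqrt]
  -- absolute values drop
  have habs : ∀ t v, |Real.sqrt (d v) * r t v| = Real.sqrt (d v) * r t v := by
    intro t v
    exact abs_of_nonneg (mul_nonneg (hsq v).le (hrnn t v))
  have habsS : ∀ t v, |Real.sqrt (d v) * (if v ∈ S t then r t v else 0)| =
      Real.sqrt (d v) * (if v ∈ S t then r t v else 0) := by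
    intro t v
    apply abs_of_nonneg
    apply mul_nonneg (hsq v).le
    split
    · exact hrnn t v
    · exact le_rfl
  -- key sum identity
  have hkey : ∀ t, (∑ v, Real.sqrt (d v) * r (t+1) v) =
      (∑ v, Real.sqrt (d v) * r t v) -
      (2 * α / (1 + α)) * ∑ v, Real.sqrt (d v) * (if v ∈ S t then r t v else 0) := by
    intro t
    set f : V → ℝ := fun w => if w ∈ S t then r t w else 0 with hf
    have hWsum : ∑ v, Real.sqrt (d v) * ∑ w, W v w * f w
        = ∑ w, Real.sqrt (d w) * f w := by
      calc ∑ v, Real.sqrt (d v) * ∑ w, W v w * f w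
          = ∑ v, ∑ w, (Real.sqrt (d v) * W v w) * f w := by
            refine Finset.sum_congr rfl fun v _ => ?_
            rw [Finset.mul_sum]
            exact Finset.sum_congr rfl fun w _ => by ring
        _ = ∑ w, ∑ v, (Real.sqrt (d v) * W v w) * f w := Finset.sum_comm
        _ = ∑ w, Real.sqrt (d w) * f w := by
            refine Finset.sum_congr rfl fun w _ => ?_
            rw [← Finset.sum_mul, hcol w]
    have h1c : 1 - c = 2 * α / (1 + α) := by
      rw [hc]
      field_simp
      ring
    rw [hrupd t]
    have hterm : ∀ v, Real.sqrt (d v) * ((r t - Q.mulVec f) v)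
        = Real.sqrt (d v) * r t v -
          (Real.sqrt (d v) * f v - c * (Real.sqrt (d v) * ∑ w, W v w * f w)) := by
      intro v
      rw [Pi.sub_apply, hmv]
      ring
    calc ∑ v, Real.sqrt (d v) * ((r t - Q.mulVec f) v)
        = (∑ v, Real.sqrt (d v) * r t v) -
          ((∑ v, Real.sqrt (d v) * f v) -
            c * ∑ v, Real.sqrt (d v) * ∑ w, W v w * f w) := by
          rw [Finset.sum_congr rfl fun v _ => hterm v, Finset.sum_sub_distrib,
            Finset.sum_sub_distrib, ← Finset.mul_sum]
      _ = (∑ v, Real.sqrt (d v) * r t v) -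
          (2 * α / (1 + α)) * ∑ v, Real.sqrt (d v) * f v := by
          rw [hWsum, ← h1c]; ring
  -- monotonicity
  have hmono : ∀ t, (∑ v, |Real.sqrt (d v) * r (t + 1) v|) ≤
      ∑ v, |Real.sqrt (d v) * r t v| := by
    intro t
    simp only [habs]
    rw [hkey t]
    have h1 : 0 ≤ ∑ v, Real.sqrt (d v) * (if v ∈ S t then r t v else 0) := by
      refine Finset.sum_nonneg fun v _ => mul_nonneg (hsq v).le ?_
      split
      · exact hrnn t v
      · exact le_rfl
    have h2 : 0 ≤ 2 * α / (1 + α) := by positivity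
    nlinarith
  refine ⟨fun t v => ⟨hxnn t v, hrnn t v⟩, ?_, hmono⟩
  intro t ht
  simp only [habs, habsS] at ht ⊢
  rw [hkey t]
  have hne : (∑ v, Real.sqrt (d v) * r t v) ≠ 0 := ne_of_gt ht
  field_simp
end

section
/- Runtime bound of LocGD: Let Q = I - ((1-α)/(1+α)) W, b = (2α/(1+α)) D^{-1/2} e_s, x^{(0)} = 0, r^{(0)} = b, and for subsets S_0, …, S_{T-1} ⊆ V define x^{(t+1)} = x^{(t)} + r^{(t)}_{S_t} and r^{(t+1)} = r^{(t)} - Q r^{(t)}_{S_t}. If ε > 0 and every active set consists of active vertices, i.e. for all t < T and all u ∈ S_t one has √(d_u) · r^{(t)}_u ≥ (2αε/(1+α)) d_u, then Σ_{t=0}^{T-1} vol(S_t) ≤ (1+α)/(2αε), where vol(S) = Σ_{u∈S} d_u. -/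
/-!
The potential `Φ(r) = ∑ᵤ √dᵤ rᵤ` drives the argument. Because `D^{1/2} 𝟙` is a left fixed vector
of `W`, it is a left eigenvector of `Q = 1 - c W`, `c = (1-α)/(1+α)`, with eigenvalue
`1 - c = 2α/(1+α)`, so step `t` lowers `Φ` by exactly `(2α/(1+α)) ∑_{u ∈ S_t} √dᵤ r⁽ᵗ⁾ᵤ`, which
activity bounds below by `(2α/(1+α)) · (2αε/(1+α)) vol(S_t)`. The residuals stay nonnegative
(pushing mass through the nonnegative matrix `c W` never makes an entry negative), so `Φ ≥ 0`
throughout, while `Φ(r⁽⁰⁾) = 2α/(1+α)`.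
-/

open Finset Matrix

section

variable {V : Type*} [Fintype V]

theorem sqrt_vecMul_eq_self_of_normalized {A W : Matrix V V ℝ} {d : V → ℝ}
    (hcol : ∀ w, ∑ u, A u w = d w) (hdpos : ∀ u, 0 < d u)
    (hW : ∀ v w, W v w = A v w / (√(d v) * √(d w))) :
    (fun u => √(d u)) ᵥ* W = fun u => √(d u) := by
  funext w
  have hsqrt : ∀ u, √(d u) ≠ 0 := fun u => (Real.sqrt_pos.mpr (hdpos u)).ne'
  calc ∑ u, √(d u) * W u w = ∑ u, A u w / √(d w) := by
        refine sum_congr rfl fun u _ => ?_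
        rw [hW]
        field_simp [hsqrt u, hsqrt w]
    _ = √(d w) := by rw [← sum_div, hcol, Real.div_sqrt]

variable [DecidableEq V]

theorem sqrt_dotProduct_one_sub_smul_mulVec {A W : Matrix V V ℝ} {d : V → ℝ}
    (hcol : ∀ w, ∑ u, A u w = d w) (hdpos : ∀ u, 0 < d u)
    (hW : ∀ v w, W v w = A v w / (√(d v) * √(d w))) (c : ℝ) (z : V → ℝ) :
    (fun u => √(d u)) ⬝ᵥ ((1 - c • W) *ᵥ z) = (1 - c) * ((fun u => √(d u)) ⬝ᵥ z) := by
  rw [dotProduct_mulVec, vecMul_sub, vecMul_one, vecMul_smul,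
    sqrt_vecMul_eq_self_of_normalized hcol hdpos hW, sub_dotProduct, smul_dotProduct, sub_mul,
    one_mul, smul_eq_mul]

theorem sqrt_dotProduct_smul_single_div_sqrt {d : V → ℝ} (s : V) (hs : 0 < d s) (κ : ℝ) :
    ((fun u => √(d u)) ⬝ᵥ fun v => κ * ((Pi.single s 1 : V → ℝ) v / √(d v))) = κ := by
  rw [dotProduct, sum_eq_single s (fun v _ hv => by simp [hv]) (by simp)]
  field_simp [(Real.sqrt_pos.mpr hs).ne']
  simp

theorem dotProduct_ite_mem (v r : V → ℝ) (S : Finset V) :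
    (v ⬝ᵥ fun u => if u ∈ S then r u else 0) = ∑ u ∈ S, v u * r u := by
  simp only [dotProduct, mul_ite, mul_zero, sum_ite_mem, univ_inter]

theorem sub_one_sub_smul_mulVec_ite_nonneg {W : Matrix V V ℝ} {c : ℝ}
    (hW : ∀ v w, 0 ≤ W v w) (hc : 0 ≤ c) (S : Finset V) {r : V → ℝ} (hr : 0 ≤ r) :
    0 ≤ r - (1 - c • W) *ᵥ fun v => if v ∈ S then r v else 0 := by
  set z : V → ℝ := fun v => if v ∈ S then r v else 0
  have hz : 0 ≤ z := fun v => by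
    dsimp only [z]; split_ifs
    exacts [hr v, le_rfl]
  have hWz : 0 ≤ W *ᵥ z := fun v => dotProduct_nonneg_of_nonneg (hW v) hz
  intro v
  have hzr : z v ≤ r v := by
    dsimp only [z]; split_ifs
    exacts [le_rfl, hr v]
  simp only [sub_mulVec, one_mulVec, smul_mulVec, Pi.sub_apply, Pi.smul_apply, smul_eq_mul,
    Pi.zero_apply]
  nlinarith [mul_nonneg hc (hWz v)]

variable {W : Matrix V V ℝ} {c : ℝ} {S : ℕ → Finset V} {r : ℕ → V → ℝ}

theorem locGD_residual_nonneg (hW : ∀ v w, 0 ≤ W v w) (hc : 0 ≤ c) (hr0 : 0 ≤ r 0)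
    (hrupd : ∀ t, r (t + 1) = r t - (1 - c • W) *ᵥ fun v => if v ∈ S t then r t v else 0) :
    ∀ t, 0 ≤ r t
  | 0 => hr0
  | t + 1 => hrupd t ▸
      sub_one_sub_smul_mulVec_ite_nonneg hW hc (S t) (locGD_residual_nonneg hW hc hr0 hrupd t)

theorem locGD_sqrt_dotProduct_residual_sub {A : Matrix V V ℝ} {d : V → ℝ}
    (hcol : ∀ w, ∑ u, A u w = d w) (hdpos : ∀ u, 0 < d u)
    (hW : ∀ v w, W v w = A v w / (√(d v) * √(d w)))
    (hrupd : ∀ t, r (t + 1) = r t - (1 - c • W) *ᵥ fun v => if v ∈ S t then r t v else 0)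
    (T : ℕ) :
    (fun u => √(d u)) ⬝ᵥ r 0 - (fun u => √(d u)) ⬝ᵥ r T
      = (1 - c) * ∑ t ∈ range T, ∑ u ∈ S t, √(d u) * r t u := by
  rw [← sum_range_sub' (fun t => (fun u => √(d u)) ⬝ᵥ r t), mul_sum]
  refine sum_congr rfl fun t _ => ?_
  rw [hrupd, dotProduct_sub, sub_sub_cancel, sqrt_dotProduct_one_sub_smul_mulVec hcol hdpos hW,
    dotProduct_ite_mem]

theorem locGD_sum_sqrt_mul_residual_le {A : Matrix V V ℝ} {d : V → ℝ}
    (hcol : ∀ w, ∑ u, A u w = d w) (hdpos : ∀ u, 0 < d u)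
    (hW : ∀ v w, W v w = A v w / (√(d v) * √(d w))) (hWnn : ∀ v w, 0 ≤ W v w) (hc : 0 ≤ c)
    (hr0 : 0 ≤ r 0)
    (hrupd : ∀ t, r (t + 1) = r t - (1 - c • W) *ᵥ fun v => if v ∈ S t then r t v else 0)
    (T : ℕ) :
    (1 - c) * ∑ t ∈ range T, ∑ u ∈ S t, √(d u) * r t u ≤ (fun u => √(d u)) ⬝ᵥ r 0 := by
  have hmassT : 0 ≤ (fun u => √(d u)) ⬝ᵥ r T :=
    dotProduct_nonneg_of_nonneg (fun u => Real.sqrt_nonneg _)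
      (locGD_residual_nonneg hWnn hc hr0 hrupd T)
  linarith [locGD_sqrt_dotProduct_residual_sub hcol hdpos hW hrupd T]

end

theorem locGD_runtime_bound_general
    {V : Type*} [Fintype V] [DecidableEq V]
    (A : Matrix V V ℝ) (hsym : A.IsSymm)
    (h01 : ∀ u v, A u v = 0 ∨ A u v = 1)
    (d : V → ℝ) (hd : ∀ u, d u = ∑ v, A u v)
    (hdpos : ∀ u, 0 < d u)
    (α : ℝ) (hα0 : 0 < α) (hα1 : α < 1)
    (W : Matrix V V ℝ)
    (hW : ∀ v w, W v w = A v w / (Real.sqrt (d v) * Real.sqrt (d w)))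
    (Q : Matrix V V ℝ) (hQ : Q = 1 - ((1 - α) / (1 + α)) • W)
    (s : V) (ε : ℝ) (hε : 0 < ε)
    (b : V → ℝ)
    (hb : b = fun v => (2 * α / (1 + α)) * ((Pi.single s 1 : V → ℝ) v / Real.sqrt (d v)))
    (T : ℕ) (S : ℕ → Finset V)
    (r : ℕ → V → ℝ)
    (hr0 : r 0 = b)
    (hrupd : ∀ t, r (t + 1) = r t - Q.mulVec fun v => if v ∈ S t then r t v else 0)
    (hactive : ∀ t < T, ∀ u ∈ S t, (2 * α * ε / (1 + α)) * d u ≤ Real.sqrt (d u) * r t u) :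
    (∑ t ∈ Finset.range T, ∑ u ∈ S t, d u) ≤ (1 + α) / (2 * α * ε) := by
  subst hQ hb
  set c := (1 - α) / (1 + α)
  have hc : 0 ≤ c := div_nonneg (by linarith) (by linarith)
  have hc1 : 1 - c = 2 * α / (1 + α) := by simp only [c]; field_simp; ring
  have hcol : ∀ w, ∑ u, A u w = d w := fun w => by simp only [hd, ← hsym.apply w]
  have hWnn : ∀ v w, 0 ≤ W v w := fun v w => by
    rw [hW]; rcases h01 v w with h | h <;> rw [h] <;> positivity
  have hsingle : (0 : V → ℝ) ≤ Pi.single s 1 := Pi.single_nonneg.2 zero_le_one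
  have hr0nn : 0 ≤ r 0 := fun v => by
    rw [hr0]; exact mul_nonneg (by positivity) (div_nonneg (hsingle v) (Real.sqrt_nonneg _))
  have hwork : ∑ t ∈ range T, ∑ u ∈ S t, √(d u) * r t u ≤ 1 := by
    have hbound := locGD_sum_sqrt_mul_residual_le hcol hdpos hW hWnn hc hr0nn hrupd T
    rw [hr0, sqrt_dotProduct_smul_single_div_sqrt s (hdpos s), ← hc1] at hbound
    exact le_of_mul_le_mul_left (by simpa using hbound) (by rw [hc1]; positivity)
  have hvol : (2 * α * ε / (1 + α)) * ∑ t ∈ range T, ∑ u ∈ S t, d u ≤ 1 := by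
    refine le_trans ?_ hwork
    simp_rw [mul_sum]
    exact sum_le_sum fun t ht => sum_le_sum (hactive t (mem_range.mp ht))
  rw [div_mul_eq_mul_div, div_le_one (by positivity)] at hvol
  rw [le_div_iff₀ (by positivity)]
  linarith

/-- Runtime bound of LocGD. -/
theorem locGD_runtime_bound
    {V : Type*} [Fintype V] [DecidableEq V] [Nonempty V]
    (A : Matrix V V ℝ) (hsym : A.IsSymm)
    (h01 : ∀ u v, A u v = 0 ∨ A u v = 1)
    (hdiag : ∀ u, A u u = 0)
    (d : V → ℝ) (hd : ∀ u, d u = ∑ v, A u v)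
    (hdpos : ∀ u, 0 < d u)
    (α : ℝ) (hα0 : 0 < α) (hα1 : α < 1)
    (W : Matrix V V ℝ)
    (hW : ∀ v w, W v w = A v w / (Real.sqrt (d v) * Real.sqrt (d w)))
    (Q : Matrix V V ℝ) (hQ : Q = 1 - ((1 - α) / (1 + α)) • W)
    (s : V) (ε : ℝ) (hε : 0 < ε)
    (b : V → ℝ)
    (hb : b = fun v => (2 * α / (1 + α)) * ((Pi.single s 1 : V → ℝ) v / Real.sqrt (d v)))
    (T : ℕ) (S : ℕ → Finset V)
    (x r : ℕ → V → ℝ)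
    (hx0 : x 0 = 0) (hr0 : r 0 = b)
    (hxupd : ∀ t, x (t + 1) = x t + fun v => if v ∈ S t then r t v else 0)
    (hrupd : ∀ t, r (t + 1) = r t - Q.mulVec fun v => if v ∈ S t then r t v else 0)
    (hactive : ∀ t < T, ∀ u ∈ S t, (2 * α * ε / (1 + α)) * d u ≤ Real.sqrt (d u) * r t u) :
    (∑ t ∈ Finset.range T, ∑ u ∈ S t, d u) ≤ (1 + α) / (2 * α * ε) :=
  locGD_runtime_bound_general A hsym h01 d hd hdpos α hα0 hα1 W hW Q hQ s ε hε b hb T S r hr0 hrupd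
    hactive
end

section
/- Precision lower bound for LocGD: In the LocGD process with Q = I - ((1-α)/(1+α)) W, b = (2α/(1+α)) D^{-1/2} e_s, x^{(0)} = 0, r^{(0)} = b, updates x^{(t+1)} = x^{(t)} + r^{(t)}_{S_t} and r^{(t+1)} = r^{(t)} - Q r^{(t)}_{S_t}, assume ε > 0, ‖D^{1/2} r^{(t)}‖_1 > 0 for all t < T, and that every u ∈ S_t is active: √(d_u) · r^{(t)}_u ≥ (2αε/(1+α)) d_u. Setting γ_t = ‖D^{1/2} r^{(t)}_{S_t}‖_1 / ‖D^{1/2} r^{(t)}‖_1, one has ε · vol(S_t) ≤ γ_t for every t < T, and consequently vol̄(S_T)/γ̄_T ≤ 1/ε, where vol̄(S_T) = (1/T) Σ_{t<T} vol(S_t) and γ̄_T = (1/T) Σ_{t<T} γ_t. -/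
/-!
The quantity `‖D^{1/2} r‖₁` never increases along LocGD: a step removes `r_S` from the residual
and adds back `β W r_S` with `β = (1-α)/(1+α) ≤ 1`, and `W` does not increase this norm.
Hence `‖D^{1/2} r^{(t)}‖₁ ≤ ‖D^{1/2} b‖₁ = 2α/(1+α)`, while activity of `S_t` gives
`‖D^{1/2} r^{(t)}_{S_t}‖₁ ≥ (2αε/(1+α)) vol(S_t)`; dividing yields `ε vol(S_t) ≤ γ_t`,
and averaging over `t < T` yields the bound on `vol̄(S_T) / γ̄_T`.
-/

open Finset Matrix

namespace LocGD

variable {V : Type*} [Fintype V]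

/-- The norm `‖D^{1/2} r‖₁` of a residual `r`, for the degree vector `d`. -/
noncomputable def degNorm (d r : V → ℝ) : ℝ := ∑ v, |√(d v) * r v|

def restrict [DecidableEq V] (S : Finset V) (r : V → ℝ) : V → ℝ :=
  fun v => if v ∈ S then r v else 0

variable {d : V → ℝ}

lemma degNorm_nonneg (r : V → ℝ) : 0 ≤ degNorm d r :=
  sum_nonneg fun _ _ => abs_nonneg _

lemma degNorm_add_le (r r' : V → ℝ) : degNorm d (r + r') ≤ degNorm d r + degNorm d r' := by
  rw [degNorm, degNorm, degNorm, ← sum_add_distrib]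
  gcongr with v
  simpa only [Pi.add_apply, mul_add] using abs_add_le _ _

lemma degNorm_smul (c : ℝ) (r : V → ℝ) : degNorm d (c • r) = |c| * degNorm d r := by
  simp only [degNorm, mul_sum, Pi.smul_apply, smul_eq_mul, ← abs_mul, mul_left_comm]

lemma degNorm_sub_restrict_add [DecidableEq V] (S : Finset V) (r : V → ℝ) :
    degNorm d (r - restrict S r) + degNorm d (restrict S r) = degNorm d r := by
  rw [degNorm, degNorm, degNorm, ← sum_add_distrib]
  refine sum_congr rfl fun v _ => ?_
  by_cases hv : v ∈ S <;> simp [restrict, hv]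

lemma sum_abs_mulVec_le {A : Matrix V V ℝ} (hA : ∀ u v, 0 ≤ A u v) (z : V → ℝ) :
    ∑ v, |(A *ᵥ z) v| ≤ ∑ u, (∑ v, A v u) * |z u| := by
  calc ∑ v, |(A *ᵥ z) v| ≤ ∑ v, ∑ u, A v u * |z u| := by
        gcongr with v
        refine (abs_sum_le_sum_abs _ _).trans_eq (sum_congr rfl fun u _ => ?_)
        rw [abs_mul, abs_of_nonneg (hA v u)]
    _ = ∑ u, (∑ v, A v u) * |z u| := by simp only [sum_mul]; exact sum_comm

/-- `D^{1/2} W D^{-1/2} = A D^{-1}` has unit column sums, so `W` does not increase `degNorm`. -/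
lemma degNorm_mulVec_le {A W : Matrix V V ℝ} (hA : ∀ u v, 0 ≤ A u v) (hsym : A.IsSymm)
    (hd : ∀ u, d u = ∑ v, A u v) (hdpos : ∀ u, 0 < d u)
    (hW : ∀ v w, W v w = A v w / (√(d v) * √(d w))) (y : V → ℝ) :
    degNorm d (W *ᵥ y) ≤ degNorm d y := by
  have hsq : ∀ u, √(d u) ≠ 0 := fun u => (Real.sqrt_pos.mpr (hdpos u)).ne'
  have hconj : ∀ v, √(d v) * (W *ᵥ y) v = (A *ᵥ fun u => y u / √(d u)) v := by
    intro v
    simp only [Matrix.mulVec, dotProduct, mul_sum, hW]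
    refine sum_congr rfl fun u _ => ?_
    field_simp [hsq v, hsq u]
  have hcol : ∀ u, ∑ v, A v u = d u := fun u => by
    rw [hd u]; exact sum_congr rfl fun v _ => hsym.apply u v
  calc degNorm d (W *ᵥ y) = ∑ v, |(A *ᵥ fun u => y u / √(d u)) v| := by
        simp only [degNorm, hconj]
    _ ≤ ∑ u, (∑ v, A v u) * |y u / √(d u)| := sum_abs_mulVec_le hA _
    _ = degNorm d y := by
        refine sum_congr rfl fun u _ => ?_
        rw [hcol, abs_div, abs_mul, abs_of_nonneg (Real.sqrt_nonneg _)]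
        nth_rewrite 1 [← Real.mul_self_sqrt (hdpos u).le]
        field_simp [hsq u]

lemma degNorm_restrict [DecidableEq V] (S : Finset V) (r : V → ℝ) :
    degNorm d (restrict S r) = ∑ v ∈ S, |√(d v) * r v| := by
  simp only [degNorm, restrict, mul_zero, apply_ite, abs_zero]
  rw [sum_ite_mem, univ_inter]

lemma degNorm_pi_single_div_sqrt [DecidableEq V] {s : V} (hs : 0 < d s) (c : ℝ) :
    degNorm d (fun v => c * ((Pi.single s 1 : V → ℝ) v / √(d v))) = |c| := by
  rw [degNorm, Fintype.sum_eq_single s fun v hv => by simp [hv]]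
  have : √(d s) ≠ 0 := (Real.sqrt_pos.mpr hs).ne'
  simp only [Pi.single_eq_same]
  rw [mul_left_comm, mul_one_div_cancel this, mul_one]

lemma degNorm_push_le [DecidableEq V] {W : Matrix V V ℝ}
    (hW : ∀ y, degNorm d (W *ᵥ y) ≤ degNorm d y) {β : ℝ} (hβ0 : 0 ≤ β) (hβ1 : β ≤ 1)
    (S : Finset V) (r : V → ℝ) :
    degNorm d (r - (1 - β • W) *ᵥ restrict S r) ≤ degNorm d r := by
  have hsplit : r - (1 - β • W) *ᵥ restrict S r = (r - restrict S r) + β • W *ᵥ restrict S r := by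
    rw [sub_mulVec, one_mulVec, smul_mulVec]; abel
  calc degNorm d (r - (1 - β • W) *ᵥ restrict S r)
      ≤ degNorm d (r - restrict S r) + |β| * degNorm d (W *ᵥ restrict S r) := by
        rw [hsplit, ← degNorm_smul]; exact degNorm_add_le _ _
    _ ≤ degNorm d (r - restrict S r) + 1 * degNorm d (restrict S r) := by
        rw [abs_of_nonneg hβ0]
        gcongr
        exacts [degNorm_nonneg _, hW _]
    _ = degNorm d r := by rw [one_mul, degNorm_sub_restrict_add]

lemma degNorm_iterate_le [DecidableEq V] {W Q : Matrix V V ℝ}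
    (hW : ∀ y, degNorm d (W *ᵥ y) ≤ degNorm d y) {β : ℝ} (hβ0 : 0 ≤ β) (hβ1 : β ≤ 1)
    (hQ : Q = 1 - β • W) {S : ℕ → Finset V} {r : ℕ → V → ℝ}
    (hrupd : ∀ t, r (t + 1) = r t - Q *ᵥ restrict (S t) (r t)) (t : ℕ) :
    degNorm d (r t) ≤ degNorm d (r 0) := by
  induction t with
  | zero => exact le_rfl
  | succ t ih =>
    rw [hrupd, hQ]
    exact (degNorm_push_le hW hβ0 hβ1 _ _).trans ih

lemma mul_sum_le_degNorm_restrict [DecidableEq V] {S : Finset V} {r : V → ℝ} {c : ℝ}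
    (hactive : ∀ u ∈ S, c * d u ≤ √(d u) * r u) :
    c * ∑ u ∈ S, d u ≤ degNorm d (restrict S r) := by
  rw [degNorm_restrict, mul_sum]
  exact sum_le_sum fun u hu => (hactive u hu).trans (le_abs_self _)

lemma mul_vol_le_degNorm_ratio [DecidableEq V] {S : Finset V} {r : V → ℝ} {c ε : ℝ}
    (hε : 0 ≤ ε) (hd : ∀ u, 0 ≤ d u) (hpos : 0 < degNorm d r) (hr : degNorm d r ≤ c)
    (hactive : ∀ u ∈ S, c * ε * d u ≤ √(d u) * r u) :
    ε * ∑ u ∈ S, d u ≤ degNorm d (restrict S r) / degNorm d r := by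
  rw [le_div_iff₀ hpos]
  calc (ε * ∑ u ∈ S, d u) * degNorm d r ≤ (ε * ∑ u ∈ S, d u) * c := by
        have := sum_nonneg fun u (_ : u ∈ S) => hd u
        gcongr
    _ = c * ε * ∑ u ∈ S, d u := by ring
    _ ≤ degNorm d (restrict S r) := mul_sum_le_degNorm_restrict hactive

end LocGD

lemma div_le_one_div_of_mul_le {a g ε : ℝ} (ha : 0 ≤ a) (hε : 0 < ε) (h : ε * a ≤ g) :
    a / g ≤ 1 / ε := by
  rcases le_or_gt g 0 with hg | hg
  · exact (div_nonpos_of_nonneg_of_nonpos ha hg).trans (one_div_pos.mpr hε).le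
  · rw [div_le_div_iff₀ hg hε]; linarith

open LocGD

theorem locGD_precision_lower_bound_general
    {V : Type*} [Fintype V] [DecidableEq V]
    (A : Matrix V V ℝ) (hsym : A.IsSymm)
    (h01 : ∀ u v, A u v = 0 ∨ A u v = 1)
    (d : V → ℝ) (hd : ∀ u, d u = ∑ v, A u v)
    (hdpos : ∀ u, 0 < d u)
    (α : ℝ) (hα0 : 0 < α) (hα1 : α < 1)
    (W : Matrix V V ℝ)
    (hW : ∀ v w, W v w = A v w / (Real.sqrt (d v) * Real.sqrt (d w)))
    (Q : Matrix V V ℝ) (hQ : Q = 1 - ((1 - α) / (1 + α)) • W)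
    (s : V) (ε : ℝ) (hε : 0 < ε)
    (b : V → ℝ)
    (hb : b = fun v => (2 * α / (1 + α)) * ((Pi.single s 1 : V → ℝ) v / Real.sqrt (d v)))
    (T : ℕ) (S : ℕ → Finset V)
    (r : ℕ → V → ℝ)
    (hr0 : r 0 = b)
    (hrupd : ∀ t, r (t + 1) = r t - Q.mulVec fun v => if v ∈ S t then r t v else 0)
    (hpos : ∀ t < T, 0 < ∑ v, |Real.sqrt (d v) * r t v|)
    (hactive : ∀ t < T, ∀ u ∈ S t, (2 * α * ε / (1 + α)) * d u ≤ Real.sqrt (d u) * r t u)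
    (γ : ℕ → ℝ)
    (hγ : ∀ t < T, γ t =
      (∑ v, |Real.sqrt (d v) * (if v ∈ S t then r t v else 0)|) /
        (∑ v, |Real.sqrt (d v) * r t v|))
    (volbar γbar : ℝ)
    (hvolbar : volbar = (1 / (T : ℝ)) * ∑ t ∈ Finset.range T, ∑ u ∈ S t, d u)
    (hγbar : γbar = (1 / (T : ℝ)) * ∑ t ∈ Finset.range T, γ t) :
    (∀ t < T, ε * (∑ u ∈ S t, d u) ≤ γ t) ∧ volbar / γbar ≤ 1 / ε := by
  have hA : ∀ u v, 0 ≤ A u v := fun u v => by rcases h01 u v with h | h <;> simp [h]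
  have hβ0 : 0 ≤ (1 - α) / (1 + α) := div_nonneg (by linarith) (by linarith)
  have hβ1 : (1 - α) / (1 + α) ≤ 1 := (div_le_one (by linarith)).mpr (by linarith)
  have hWnorm := degNorm_mulVec_le hA hsym hd hdpos hW
  have hnorm : ∀ t, degNorm d (r t) ≤ 2 * α / (1 + α) := fun t => by
    refine (degNorm_iterate_le hWnorm hβ0 hβ1 hQ hrupd t).trans_eq ?_
    rw [hr0, hb, degNorm_pi_single_div_sqrt (hdpos s), abs_of_pos (by positivity)]
  have hstep : ∀ t < T, ε * (∑ u ∈ S t, d u) ≤ γ t := fun t ht => by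
    rw [hγ t ht]
    refine mul_vol_le_degNorm_ratio hε.le (fun u => (hdpos u).le) (hpos t ht) (hnorm t) ?_
    intro u hu
    convert hactive t ht u hu using 2
    ring
  refine ⟨hstep, ?_⟩
  rw [hvolbar, hγbar]
  have hvol : 0 ≤ ∑ t ∈ range T, ∑ u ∈ S t, d u :=
    sum_nonneg fun t _ => sum_nonneg fun u _ => (hdpos u).le
  refine div_le_one_div_of_mul_le (by positivity) hε ?_
  rw [mul_left_comm, mul_sum]
  gcongr with t ht
  exact hstep t (mem_range.mp ht)

/-- Precision lower bound for LocGD. -/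
theorem locGD_precision_lower_bound
    {V : Type*} [Fintype V] [DecidableEq V] [Nonempty V]
    (A : Matrix V V ℝ) (hsym : A.IsSymm)
    (h01 : ∀ u v, A u v = 0 ∨ A u v = 1)
    (hdiag : ∀ u, A u u = 0)
    (d : V → ℝ) (hd : ∀ u, d u = ∑ v, A u v)
    (hdpos : ∀ u, 0 < d u)
    (α : ℝ) (hα0 : 0 < α) (hα1 : α < 1)
    (W : Matrix V V ℝ)
    (hW : ∀ v w, W v w = A v w / (Real.sqrt (d v) * Real.sqrt (d w)))
    (Q : Matrix V V ℝ) (hQ : Q = 1 - ((1 - α) / (1 + α)) • W)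
    (s : V) (ε : ℝ) (hε : 0 < ε)
    (b : V → ℝ)
    (hb : b = fun v => (2 * α / (1 + α)) * ((Pi.single s 1 : V → ℝ) v / Real.sqrt (d v)))
    (T : ℕ) (hT : 1 ≤ T) (S : ℕ → Finset V)
    (x r : ℕ → V → ℝ)
    (hx0 : x 0 = 0) (hr0 : r 0 = b)
    (hxupd : ∀ t, x (t + 1) = x t + fun v => if v ∈ S t then r t v else 0)
    (hrupd : ∀ t, r (t + 1) = r t - Q.mulVec fun v => if v ∈ S t then r t v else 0)
    (hpos : ∀ t < T, 0 < ∑ v, |Real.sqrt (d v) * r t v|)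
    (hactive : ∀ t < T, ∀ u ∈ S t, (2 * α * ε / (1 + α)) * d u ≤ Real.sqrt (d u) * r t u)
    (γ : ℕ → ℝ)
    (hγ : ∀ t < T, γ t =
      (∑ v, |Real.sqrt (d v) * (if v ∈ S t then r t v else 0)|) /
        (∑ v, |Real.sqrt (d v) * r t v|))
    (volbar γbar : ℝ)
    (hvolbar : volbar = (1 / (T : ℝ)) * ∑ t ∈ Finset.range T, ∑ u ∈ S t, d u)
    (hγbar : γbar = (1 / (T : ℝ)) * ∑ t ∈ Finset.range T, γ t) :
    (∀ t < T, ε * (∑ u ∈ S t, d u) ≤ γ t) ∧ volbar / γbar ≤ 1 / ε :=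
  locGD_precision_lower_bound_general A hsym h01 d hd hdpos α hα0 hα1 W hW Q hQ s ε hε b hb T S r
    hr0 hrupd hpos hactive γ hγ volbar γbar hvolbar hγbar
end

section
/- Stopping-condition justification for the symmetrized PPR system: The matrix Q = I - ((1-α)/(1+α)) W is invertible, and for every right-hand-side vector b and every vector x, ‖D^{-1/2}(x - Q^{-1} b)‖_∞ ≤ ((1+α)/(2α)) · ‖D^{-1/2}(b - Q x)‖_∞. In particular, if the residual r = b - Qx satisfies ‖D^{-1/2} r‖_∞ ≤ 2αε/(1+α) for some ε > 0, then ‖D^{-1/2}(x - Q^{-1} b)‖_∞ ≤ ε. -/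
/-!
In the weighted sup norm `‖D^{-1/2} y‖_∞` the matrix `W` acts as the random-walk matrix
`D⁻¹A = D^{-1/2} W D^{1/2}`, which is row-stochastic and hence a contraction. With
`c = (1-α)/(1+α)` this gives `‖D^{-1/2} Q y‖_∞ ≥ (1 - c) ‖D^{-1/2} y‖_∞ = 2α/(1+α) ‖D^{-1/2} y‖_∞`.
That lower bound makes `Q` injective, hence invertible, and for `y = x - Q⁻¹ b`, where
`Q y = -(b - Q x)`, it is the error estimate.
-/

open Finset Matrix

namespace Matrix

variable {n : Type*} [Fintype n] [DecidableEq n]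

theorem norm_mulVec_le_of_mem_rowStochastic {M : Matrix n n ℝ} (hM : M ∈ rowStochastic ℝ n)
    (x : n → ℝ) : ‖M *ᵥ x‖ ≤ ‖x‖ := by
  refine (pi_norm_le_iff_of_nonneg (norm_nonneg x)).2 fun i => ?_
  calc ‖(M *ᵥ x) i‖ ≤ ∑ j, M i j * ‖x j‖ := by
        refine (norm_sum_le _ _).trans_eq (sum_congr rfl fun j _ => ?_)
        rw [norm_mul, Real.norm_of_nonneg (hM.1 i j)]
    _ ≤ ∑ j, M i j * ‖x‖ := by gcongr with j; exacts [hM.1 i j, norm_le_pi_norm x j]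
    _ = ‖x‖ := by rw [← sum_mul, sum_row_of_mem_rowStochastic hM, one_mul]

end Matrix

theorem norm_le_inv_one_sub_mul_norm_sub_smul {E : Type*} [SeminormedAddCommGroup E]
    [NormedSpace ℝ E] {c : ℝ} (hc0 : 0 ≤ c) (hc1 : c < 1) {x y : E} (hy : ‖y‖ ≤ ‖x‖) :
    ‖x‖ ≤ (1 - c)⁻¹ * ‖x - c • y‖ := by
  have : ‖x‖ ≤ ‖x - c • y‖ + c * ‖x‖ := calc
    ‖x‖ ≤ ‖x - c • y‖ + ‖c • y‖ := norm_le_norm_sub_add x (c • y)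
    _ ≤ ‖x - c • y‖ + c * ‖x‖ := by
      rw [norm_smul, Real.norm_of_nonneg hc0]
      gcongr
  rw [le_inv_mul_iff₀ (sub_pos.2 hc1)]
  linarith

section WeightedSupNorm

variable {V : Type*} [Fintype V]

noncomputable def randomWalkMatrix (A : Matrix V V ℝ) (d : V → ℝ) : Matrix V V ℝ :=
  of fun v w => A v w / d v

theorem randomWalkMatrix_mem_rowStochastic [DecidableEq V] {A : Matrix V V ℝ} {d : V → ℝ}
    (hA : ∀ u v, 0 ≤ A u v) (hd : ∀ u, d u = ∑ v, A u v) (hdpos : ∀ u, 0 < d u) :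
    randomWalkMatrix A d ∈ rowStochastic ℝ V := by
  refine mem_rowStochastic_iff_sum.2 ⟨fun u v => div_nonneg (hA u v) (hdpos u).le, fun u => ?_⟩
  simp only [randomWalkMatrix, of_apply, ← sum_div, ← hd, div_self (hdpos u).ne']

-- With `s = √d` the vector `y / s` is `D^{-1/2} y`, so this is `D^{-1/2} W D^{1/2} = D⁻¹A`.
theorem mulVec_div_eq_randomWalkMatrix_mulVec {A W : Matrix V V ℝ} {d s : V → ℝ}
    (hs : ∀ v, s v * s v = d v) (hs0 : ∀ v, s v ≠ 0)
    (hW : ∀ v w, W v w = A v w / (s v * s w)) (y : V → ℝ) :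
    W *ᵥ y / s = randomWalkMatrix A d *ᵥ (y / s) := by
  ext v
  simp only [Pi.div_apply, mulVec, dotProduct, sum_div, randomWalkMatrix, of_apply, hW, ← hs]
  refine sum_congr rfl fun w _ => ?_
  field_simp [hs0 v, hs0 w]

theorem isUnit_of_norm_div_le [DecidableEq V] {M : Matrix V V ℝ} {s : V → ℝ} {K : ℝ}
    (hs0 : ∀ v, s v ≠ 0) (hM : ∀ y, ‖y / s‖ ≤ K * ‖M *ᵥ y / s‖) : IsUnit M := by
  refine mulVec_injective_iff_isUnit.1 fun y z hyz => ?_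
  have h := hM (y - z)
  rw [mulVec_sub, hyz, sub_self, div_eq_mul_inv 0, zero_mul, norm_zero, mul_zero,
    norm_le_zero_iff] at h
  ext v
  simpa [hs0 v, sub_eq_zero] using congrFun h v

theorem norm_sub_inv_mulVec_div_le [DecidableEq V] {M : Matrix V V ℝ} {s : V → ℝ} {K : ℝ}
    (hM : ∀ y, ‖y / s‖ ≤ K * ‖M *ᵥ y / s‖) (hunit : IsUnit M) (b x : V → ℝ) :
    ‖(x - M⁻¹ *ᵥ b) / s‖ ≤ K * ‖(b - M *ᵥ x) / s‖ := by
  have hres : M *ᵥ (x - M⁻¹ *ᵥ b) = -(b - M *ᵥ x) := by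
    rw [mulVec_sub, mulVec_mulVec, mul_nonsing_inv _ ((isUnit_iff_isUnit_det M).1 hunit),
      one_mulVec, neg_sub]
  simpa only [hres, neg_div, norm_neg] using hM (x - M⁻¹ *ᵥ b)

theorem norm_div_le_mul_norm_ppr_mulVec_div [DecidableEq V] {A W : Matrix V V ℝ} {d s : V → ℝ}
    (hA : ∀ u v, 0 ≤ A u v) (hd : ∀ u, d u = ∑ v, A u v) (hdpos : ∀ u, 0 < d u)
    (hs : ∀ v, s v * s v = d v) (hs0 : ∀ v, s v ≠ 0)
    (hW : ∀ v w, W v w = A v w / (s v * s w)) {α : ℝ} (hα0 : 0 < α) (hα1 : α ≤ 1)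
    (y : V → ℝ) :
    ‖y / s‖ ≤ (1 + α) / (2 * α) * ‖(1 - ((1 - α) / (1 + α)) • W) *ᵥ y / s‖ := by
  have h1c : 1 - (1 - α) / (1 + α) = 2 * α / (1 + α) := by
    field_simp
    ring
  set c := (1 - α) / (1 + α)
  have hc0 : 0 ≤ c := div_nonneg (by linarith) (by linarith)
  have hc1 : c < 1 := (div_lt_one (by linarith)).2 (by linarith)
  have hQ : (1 - c • W) *ᵥ y / s = y / s - c • (randomWalkMatrix A d *ᵥ (y / s)) := by
    simp only [sub_mulVec, one_mulVec, smul_mulVec, div_eq_mul_inv, sub_mul, smul_mul_assoc]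
    rw [← div_eq_mul_inv, ← div_eq_mul_inv, mulVec_div_eq_randomWalkMatrix_mulVec hs hs0 hW]
  rw [← inv_div (2 * α), ← h1c, hQ]
  exact norm_le_inv_one_sub_mul_norm_sub_smul hc0 hc1
    (norm_mulVec_le_of_mem_rowStochastic (randomWalkMatrix_mem_rowStochastic hA hd hdpos) _)

end WeightedSupNorm

theorem ppr_stopping_condition_justification_general
    {V : Type*} [Fintype V] [DecidableEq V]
    (A : Matrix V V ℝ)
    (h01 : ∀ u v, A u v = 0 ∨ A u v = 1)
    (d : V → ℝ) (hd : ∀ u, d u = ∑ v, A u v)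
    (hdpos : ∀ u, 0 < d u)
    (α : ℝ) (hα0 : 0 < α) (hα1 : α < 1)
    (W : Matrix V V ℝ)
    (hW : ∀ v w, W v w = A v w / (Real.sqrt (d v) * Real.sqrt (d w)))
    (Q : Matrix V V ℝ) (hQ : Q = 1 - ((1 - α) / (1 + α)) • W) :
    IsUnit Q ∧
    (∀ b x : V → ℝ,
      ‖fun v => (x v - Q⁻¹.mulVec b v) / Real.sqrt (d v)‖ ≤
        ((1 + α) / (2 * α)) * ‖fun v => (b v - Q.mulVec x v) / Real.sqrt (d v)‖) ∧
    (∀ b x : V → ℝ, ∀ ε : ℝ, 0 < ε →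
      ‖fun v => (b v - Q.mulVec x v) / Real.sqrt (d v)‖ ≤ 2 * α * ε / (1 + α) →
      ‖fun v => (x v - Q⁻¹.mulVec b v) / Real.sqrt (d v)‖ ≤ ε) := by
  have hA : ∀ u v, 0 ≤ A u v := fun u v => by rcases h01 u v with h | h <;> simp [h]
  have hs : ∀ v, √(d v) * √(d v) = d v := fun v => Real.mul_self_sqrt (hdpos v).le
  have hs0 : ∀ v, √(d v) ≠ 0 := fun v => (Real.sqrt_pos.2 (hdpos v)).ne'
  have hbound : ∀ y, ‖y / fun v => √(d v)‖ ≤ (1 + α) / (2 * α) * ‖Q *ᵥ y / fun v => √(d v)‖ :=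
    hQ ▸ norm_div_le_mul_norm_ppr_mulVec_div hA hd hdpos hs hs0 hW hα0 hα1.le
  have hunit : IsUnit Q := isUnit_of_norm_div_le hs0 hbound
  have herror := norm_sub_inv_mulVec_div_le hbound hunit
  refine ⟨hunit, herror, fun b x ε _ hres => ?_⟩
  calc _ ≤ (1 + α) / (2 * α) * ‖(b - Q *ᵥ x) / fun v => √(d v)‖ := herror b x
    _ ≤ (1 + α) / (2 * α) * (2 * α * ε / (1 + α)) := by gcongr; exact hres
    _ = ε := by field_simp

/-- Stopping-condition justification for the symmetrized PPR system. -/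
theorem ppr_stopping_condition_justification
    {V : Type*} [Fintype V] [DecidableEq V] [Nonempty V]
    (A : Matrix V V ℝ) (hsym : A.IsSymm)
    (h01 : ∀ u v, A u v = 0 ∨ A u v = 1)
    (hdiag : ∀ u, A u u = 0)
    (d : V → ℝ) (hd : ∀ u, d u = ∑ v, A u v)
    (hdpos : ∀ u, 0 < d u)
    (α : ℝ) (hα0 : 0 < α) (hα1 : α < 1)
    (W : Matrix V V ℝ)
    (hW : ∀ v w, W v w = A v w / (Real.sqrt (d v) * Real.sqrt (d w)))
    (Q : Matrix V V ℝ) (hQ : Q = 1 - ((1 - α) / (1 + α)) • W) :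
    IsUnit Q ∧
    (∀ b x : V → ℝ,
      ‖fun v => (x v - Q⁻¹.mulVec b v) / Real.sqrt (d v)‖ ≤
        ((1 + α) / (2 * α)) * ‖fun v => (b v - Q.mulVec x v) / Real.sqrt (d v)‖) ∧
    (∀ b x : V → ℝ, ∀ ε : ℝ, 0 < ε →
      ‖fun v => (b v - Q.mulVec x v) / Real.sqrt (d v)‖ ≤ 2 * α * ε / (1 + α) →
      ‖fun v => (x v - Q⁻¹.mulVec b v) / Real.sqrt (d v)‖ ≤ ε) :=
  ppr_stopping_condition_justification_general A h01 d hd hdpos α hα0 hα1 W hW Q hQ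
end

section
/- Chebyshev ratio sequence bounds: Define the real sequence δ_1 = (1-α)/(1+α) and δ_{t+1} = (2(1+α)/(1-α) - δ_t)^{-1} for t ≥ 1, and let α̃ = (1-√α)/(1+√α). Then: (i) 0 < δ_t ≤ (1-α)/(1+α) < 1 for every t ≥ 1; (ii) ∏_{j=1}^{t} δ_j = 2/(α̃^t + α̃^{-t}) ≤ 2 α̃^t for every t ≥ 1; and (iii) for all integers 0 ≤ k ≤ t, ∏_{j=k+1}^{t} δ_j ≤ 2 α̃^{t-k}. -/
/-- Chebyshev ratio sequence bounds. -/
theorem chebyshev_ratio_sequence_bounds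
    (α : ℝ) (hα0 : 0 < α) (hα1 : α < 1)
    (δ : ℕ → ℝ) (hδ1 : δ 1 = (1 - α) / (1 + α))
    (hδrec : ∀ t, 1 ≤ t → δ (t + 1) = (2 * (1 + α) / (1 - α) - δ t)⁻¹)
    (atil : ℝ) (hatil : atil = (1 - Real.sqrt α) / (1 + Real.sqrt α)) :
    (∀ t, 1 ≤ t → 0 < δ t ∧ δ t ≤ (1 - α) / (1 + α) ∧ (1 - α) / (1 + α) < 1) ∧
    (∀ t, 1 ≤ t →
      (∏ j ∈ Finset.Icc 1 t, δ j) = 2 / (atil ^ t + (atil ^ t)⁻¹) ∧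
      (∏ j ∈ Finset.Icc 1 t, δ j) ≤ 2 * atil ^ t) ∧
    (∀ k t : ℕ, k ≤ t → (∏ j ∈ Finset.Icc (k + 1) t, δ j) ≤ 2 * atil ^ (t - k)) := by
  have hs2 : Real.sqrt α ^ 2 = α := Real.sq_sqrt hα0.le
  have hs0 : 0 < Real.sqrt α := Real.sqrt_pos.2 hα0
  have hs1 : Real.sqrt α < 1 := by nlinarith [hs2]
  have h1α : (0:ℝ) < 1 - α := by linarith
  have h1α' : (0:ℝ) < 1 + α := by linarith
  have hq0 : 0 < atil := by rw [hatil]; apply div_pos <;> linarith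
  have hq1 : atil < 1 := by
    rw [hatil, div_lt_one (by linarith)]; linarith
  have hsum : atil + atil⁻¹ = 2 * (1 + α) / (1 - α) := by
    rw [hatil, inv_div]
    rw [div_add_div _ _ (by linarith : (1:ℝ) + Real.sqrt α ≠ 0) (by linarith : (1:ℝ) - Real.sqrt α ≠ 0)]
    rw [div_eq_div_iff (by nlinarith) (by linarith)]
    nlinarith [hs2]
  have hS : ∀ n : ℕ, 0 < atil ^ n + (atil ^ n)⁻¹ := fun n => by positivity
  -- explicit form of δ
  have hform : ∀ n : ℕ, δ (n + 1)
      = (atil ^ n + (atil ^ n)⁻¹) / (atil ^ (n + 1) + (atil ^ (n + 1))⁻¹) := by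
    intro n
    induction n with
    | zero =>
      simp only [zero_add, pow_zero, pow_one, inv_one, hδ1, hsum]
      rw [div_div_eq_mul_div]
      field_simp
      ring
    | succ n ih =>
      have key : atil + atil⁻¹ - (atil ^ n + (atil ^ n)⁻¹) / (atil ^ (n + 1) + (atil ^ (n + 1))⁻¹)
          = (atil ^ (n + 1 + 1) + (atil ^ (n + 1 + 1))⁻¹) / (atil ^ (n + 1) + (atil ^ (n + 1))⁻¹) := by
        field_simp
        ring
      rw [hδrec (n + 1) (by omega), ih, ← hsum, key, inv_div]
  -- positivity and upper bound of δ
  have hpos : ∀ n : ℕ, 0 < δ (n + 1) := by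
    intro n
    rw [hform n]
    exact div_pos (hS n) (hS (n + 1))
  have hub : ∀ n : ℕ, δ (n + 1) ≤ (1 - α) / (1 + α) := by
    intro n
    induction n with
    | zero => rw [hδ1]
    | succ n ih =>
      rw [hδrec (n + 1) (by omega)]
      have hle : (1 - α) / (1 + α) ≤ (1 + α) / (1 - α) := by
        rw [div_le_div_iff₀ h1α' h1α]; nlinarith
      have hD : (1 + α) / (1 - α) ≤ 2 * (1 + α) / (1 - α) - δ (n + 1) := by
        have := le_trans ih hle
        have h2 : 2 * (1 + α) / (1 - α) = 2 * ((1 + α) / (1 - α)) := by ring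
        rw [h2]; linarith
      have hXpos : 0 < (1 + α) / (1 - α) := div_pos h1α' h1α
      calc (2 * (1 + α) / (1 - α) - δ (n + 1))⁻¹
          ≤ ((1 + α) / (1 - α))⁻¹ := by
            apply inv_anti₀ hXpos hD
        _ = (1 - α) / (1 + α) := by rw [inv_div]
  have hr1 : (1 - α) / (1 + α) < 1 := by
    rw [div_lt_one h1α']; linarith
  -- general telescoping product
  have hprod : ∀ k t : ℕ, k ≤ t →
      (∏ j ∈ Finset.Icc (k + 1) t, δ j)
        = (atil ^ k + (atil ^ k)⁻¹) / (atil ^ t + (atil ^ t)⁻¹) := by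
    intro k t hkt
    induction t with
    | zero =>
      interval_cases k
      simp [div_self (hS 0).ne']
    | succ t ih =>
      rcases Nat.lt_or_ge k (t + 1) with h | h
      · have hk : k ≤ t := by omega
        rw [Finset.prod_Icc_succ_top (by omega : k + 1 ≤ t + 1), ih hk, hform t]
        rw [div_mul_div_comm, div_eq_div_iff (by positivity) (hS (t + 1)).ne']
        ring
      · have : k = t + 1 := by omega
        subst this
        simp [div_self (hS (t + 1)).ne']
  -- bound S_k / S_t ≤ 2 * atil^(t-k)
  have hbound : ∀ k m : ℕ,
      (atil ^ k + (atil ^ k)⁻¹) / (atil ^ (k + m) + (atil ^ (k + m))⁻¹) ≤ 2 * atil ^ m := by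
    intro k m
    have hA : atil ^ k + (atil ^ k)⁻¹ ≤ 2 * (atil ^ k)⁻¹ := by
      have h1 : atil ^ k ≤ 1 := pow_le_one₀ hq0.le hq1.le
      have h2 : (1:ℝ) ≤ (atil ^ k)⁻¹ := (one_le_inv₀ (pow_pos hq0 k)).2 h1
      have h3 : atil ^ k ≤ (atil ^ k)⁻¹ := le_trans h1 h2
      linarith
    have hB : (atil ^ (k + m))⁻¹ ≤ atil ^ (k + m) + (atil ^ (k + m))⁻¹ :=
      le_add_of_nonneg_left (pow_pos hq0 _).le
    have hBpos : 0 < (atil ^ (k + m))⁻¹ := by positivity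
    calc (atil ^ k + (atil ^ k)⁻¹) / (atil ^ (k + m) + (atil ^ (k + m))⁻¹)
        ≤ 2 * (atil ^ k)⁻¹ / (atil ^ (k + m))⁻¹ :=
          div_le_div₀ (by positivity) hA hBpos hB
      _ = 2 * atil ^ m := by
          rw [pow_add]
          field_simp
  refine ⟨?_, ?_, ?_⟩
  · intro t ht
    obtain ⟨n, rfl⟩ := Nat.exists_eq_add_of_le ht
    rw [add_comm]
    exact ⟨hpos n, hub n, hr1⟩
  · intro t ht
    have h0 := hprod 0 t (by omega)
    simp only [zero_add, pow_zero, inv_one] at h0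
    norm_num at h0
    constructor
    · rw [h0]
    · rw [h0]
      have h := hbound 0 t
      simp only [zero_add, pow_zero, inv_one] at h
      norm_num at h
      exact h
  · intro k t hkt
    obtain ⟨m, rfl⟩ := Nat.exists_eq_add_of_le hkt
    rw [hprod k (k + m) (by omega)]
    have : k + m - k = m := by omega
    rw [this]
    exact hbound k m
end

section
/- Residual recursion of the local Chebyshev method: Let δ_0 = 0, δ_1 = (1-α)/(1+α), δ_{t+1} = (2(1+α)/(1-α) - δ_t)^{-1}, Q = I - ((1-α)/(1+α)) W, b a vector, r^{(t)} = b - Q x^{(t)}, and given subsets S_t ⊆ V with S_0 = supp(r^{(0)}), define x^{(0)} = 0, x^{(1)} = r^{(0)}_{S_0}, and x^{(t+1)} = x^{(t)} + (1 + δ_t δ_{t+1}) r^{(t)}_{S_t} + δ_t δ_{t+1} (x^{(t)} - x^{(t-1)})_{S_t} for t ≥ 1. Then for every t ≥ 1, r^{(t+1)} - 2 δ_{t+1} W r^{(t)} + δ_t δ_{t+1} r^{(t-1)} = Σ_{j=0}^{t} (1 + δ_j δ_{j+1}) · (∏_{r=j+1}^{t} δ_r δ_{r+1}) · Q r^{(j)}_{S_{j,t}},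 where S_{j,t} = S_j ∩ … ∩ S_{t-1} ∩ (V ∖ S_t) for j < t and S_{t,t} = V ∖ S_t. -/
/-!
With `κ = (1 - α) / (1 + α)` the recursion for `δ` is equivalent to
`2 δ_{t+1} = (1 + δ_t δ_{t+1}) κ`, so `2 δ_{t+1} W = (1 + δ_t δ_{t+1}) (I - Q)`.
Substituting the update rule into `r = b - Q x`, everything the update does on `S_t` cancels,
and the left-hand side becomes `Q` applied to the restrictions to `V ∖ S_t` of
`(1 + δ_t δ_{t+1}) r^{(t)}` and `δ_t δ_{t+1} (x^{(t)} - x^{(t-1)})`. Unrolling the update rule,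
`x^{(n+1)} - x^{(n)} = ∑_{j ≤ n} (1 + δ_j δ_{j+1}) ∏_{i=j+1}^{n} δ_i δ_{i+1} r^{(j)}_{S_j ∩ ⋯ ∩ S_n}`,
which turns the second restriction into the terms `j < t` of the sum.
-/

open Finset Matrix

theorem Finset.ite_mem_eq_indicator {V M : Type*} [DecidableEq V] [Zero M] (s : Finset V)
    (f : V → M) : (fun v => if v ∈ s then f v else 0) = (s : Set V).indicator f := by
  ext v
  simp only [Set.indicator_apply, Finset.mem_coe]

namespace LocalChebyshev

section Delta

variable {κ : ℝ} {δ : ℕ → ℝ}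

theorem delta_le_one (hκ0 : 0 < κ) (hκ1 : κ ≤ 1) (hδ1 : δ 1 ≤ 1)
    (hδrec : ∀ t, 1 ≤ t → δ (t + 1) = (2 / κ - δ t)⁻¹) : ∀ n, 1 ≤ n → δ n ≤ 1 := by
  intro n hn
  induction n, hn using Nat.le_induction with
  | base => exact hδ1
  | succ n hn ih =>
    have h2 : 2 ≤ 2 / κ := by rw [le_div_iff₀ hκ0]; linarith
    rw [hδrec n hn]
    exact inv_le_one_of_one_le₀ (by linarith)

theorem two_mul_delta_succ (hκ0 : 0 < κ) (hκ1 : κ ≤ 1) (hδ1 : δ 1 ≤ 1)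
    (hδrec : ∀ t, 1 ≤ t → δ (t + 1) = (2 / κ - δ t)⁻¹) (n : ℕ) (hn : 1 ≤ n) :
    2 * δ (n + 1) = (1 + δ n * δ (n + 1)) * κ := by
  have h2 : 2 ≤ 2 / κ := by rw [le_div_iff₀ hκ0]; linarith
  have hpos : 0 < 2 / κ - δ n := by linarith [delta_le_one hκ0 hκ1 hδ1 hδrec n hn]
  have hinv : δ (n + 1) * (2 / κ - δ n) = 1 := by
    rw [hδrec n hn]; exact inv_mul_cancel₀ hpos.ne'
  field_simp at hinv
  linarith

end Delta

section Increment

variable {V R : Type*} [Fintype V] [DecidableEq V] [CommRing R] (δ : ℕ → R) (r : ℕ → V → R)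
  (S : ℕ → Finset V)

def coeff (j n : ℕ) : R := (1 + δ j * δ (j + 1)) * ∏ i ∈ Icc (j + 1) n, δ i * δ (i + 1)

theorem coeff_self (n : ℕ) : coeff δ n n = 1 + δ n * δ (n + 1) := by
  simp [coeff]

theorem coeff_succ {j n : ℕ} (hj : j ≤ n) :
    coeff δ j (n + 1) = coeff δ j n * (δ (n + 1) * δ (n + 1 + 1)) := by
  rw [coeff, coeff, prod_Icc_succ_top (by omega), mul_assoc]

theorem inf_Icc_succ {j n : ℕ} (hj : j ≤ n + 1) :
    (Icc j (n + 1)).inf S = S (n + 1) ∩ (Icc j n).inf S := by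
  rw [← insert_Icc_right_eq_Icc_add_one hj, inf_insert, inf_eq_inter]

noncomputable def increment (n : ℕ) : V → R :=
  ∑ j ∈ range (n + 1), coeff δ j n • (↑((Icc j n).inf S) : Set V).indicator (r j)

theorem smul_indicator_increment (n : ℕ) (U : Set V) :
    (δ (n + 1) * δ (n + 1 + 1)) • U.indicator (increment δ r S n) =
      ∑ j ∈ range (n + 1), coeff δ j (n + 1) • (U ∩ ↑((Icc j n).inf S)).indicator (r j) := by
  rw [increment, indicator_sum, smul_sum]
  refine sum_congr rfl fun j hj => ?_
  have hsmul : U.indicator (coeff δ j n • (↑((Icc j n).inf S) : Set V).indicator (r j)) =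
      coeff δ j n • U.indicator ((↑((Icc j n).inf S) : Set V).indicator (r j)) :=
    Set.indicator_const_smul U (coeff δ j n) _
  rw [coeff_succ δ (by simp at hj; omega), hsmul, smul_smul, mul_comm, Set.indicator_indicator]

theorem increment_succ (n : ℕ) :
    increment δ r S (n + 1) =
      (1 + δ (n + 1) * δ (n + 1 + 1)) • (S (n + 1) : Set V).indicator (r (n + 1)) +
        (δ (n + 1) * δ (n + 1 + 1)) • (S (n + 1) : Set V).indicator (increment δ r S n) := by
  rw [smul_indicator_increment, increment, sum_range_succ, add_comm, coeff_self, Icc_self,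
    inf_singleton]
  congr 1
  refine sum_congr rfl fun j hj => ?_
  rw [inf_Icc_succ S (by simp at hj; omega), coe_inter]

theorem sub_eq_increment (x : ℕ → V → R) (hδ0 : δ 0 = 0) (hx0 : x 0 = 0)
    (hx1 : x 1 = (S 0 : Set V).indicator (r 0))
    (hxupd : ∀ t, 1 ≤ t → x (t + 1) = x t
        + (1 + δ t * δ (t + 1)) • (S t : Set V).indicator (r t)
        + (δ t * δ (t + 1)) • (S t : Set V).indicator (x t - x (t - 1))) (n : ℕ) :
    x (n + 1) - x n = increment δ r S n := by
  induction n with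
  | zero => simp [increment, coeff, hδ0, hx0, hx1]
  | succ n ih =>
    rw [increment_succ, ← ih, hxupd (n + 1) (by omega), Nat.add_sub_cancel]
    abel

theorem indicator_compl_increment (n : ℕ) :
    (1 + δ (n + 1) * δ (n + 1 + 1)) • (S (n + 1) : Set V)ᶜ.indicator (r (n + 1)) +
        (δ (n + 1) * δ (n + 1 + 1)) • (S (n + 1) : Set V)ᶜ.indicator (increment δ r S n) =
      ∑ j ∈ range (n + 1 + 1),
        coeff δ j (n + 1) • ((((Icc j n).inf S) \ S (n + 1) : Finset V) : Set V).indicator (r j) := by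
  rw [smul_indicator_increment, sum_range_succ _ (n + 1), coeff_self,
    Icc_eq_empty_of_lt (Nat.lt_succ_self n), inf_empty, top_eq_univ, add_comm]
  simp only [coe_sdiff, Set.sdiff_eq_compl_inter, coe_univ, Set.inter_univ]

end Increment

theorem residual_step {V R : Type*} [Fintype V] [DecidableEq V] [CommRing R]
    {Q W : Matrix V V R} {κ c β : R} (hQ : Q = 1 - κ • W) (hβ : β = (1 + c) * κ) {b x₀ x₁ x₂ r₀ r₁ r₂ : V → R}
    (hr₀ : r₀ = b - Q *ᵥ x₀) (hr₁ : r₁ = b - Q *ᵥ x₁) (hr₂ : r₂ = b - Q *ᵥ x₂) (s : Set V)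
    (hx₂ : x₂ = x₁ + (1 + c) • s.indicator r₁ + c • s.indicator (x₁ - x₀)) :
    r₂ - β • W *ᵥ r₁ + c • r₀ = Q *ᵥ ((1 + c) • sᶜ.indicator r₁ + c • sᶜ.indicator (x₁ - x₀)) := by
  have hW : β • W *ᵥ r₁ = (1 + c) • (r₁ - Q *ᵥ r₁) := by
    rw [hβ, mul_smul, ← smul_mulVec, hQ, sub_mulVec, one_mulVec]
    abel_nf
  rw [hW, Set.indicator_compl, Set.indicator_compl, hr₂, hx₂, hr₀, hr₁]
  simp only [mulVec_add, mulVec_sub, mulVec_smul]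
  module

end LocalChebyshev

open LocalChebyshev

theorem locCH_residual_recursion_general
    {V : Type*} [Fintype V] [DecidableEq V]
    (α : ℝ) (hα0 : 0 < α) (hα1 : α < 1)
    (W : Matrix V V ℝ)
    (Q : Matrix V V ℝ) (hQ : Q = 1 - ((1 - α) / (1 + α)) • W)
    (δ : ℕ → ℝ) (hδ0 : δ 0 = 0) (hδ1 : δ 1 = (1 - α) / (1 + α))
    (hδrec : ∀ t, 1 ≤ t → δ (t + 1) = (2 * (1 + α) / (1 - α) - δ t)⁻¹)
    (b : V → ℝ) (x r : ℕ → V → ℝ)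
    (hr : ∀ t, r t = b - Q.mulVec (x t))
    (S : ℕ → Finset V)
    (hx0 : x 0 = 0)
    (hx1 : x 1 = fun v => if v ∈ S 0 then r 0 v else 0)
    (hxupd : ∀ t, 1 ≤ t → x (t + 1) = x t
        + (1 + δ t * δ (t + 1)) • (fun v => if v ∈ S t then r t v else 0)
        + (δ t * δ (t + 1)) • (fun v => if v ∈ S t then x t v - x (t - 1) v else 0)) :
    ∀ t, 1 ≤ t →
      r (t + 1) - (2 * δ (t + 1)) • W.mulVec (r t) + (δ t * δ (t + 1)) • r (t - 1) =
        ∑ j ∈ Finset.range (t + 1),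
          ((1 + δ j * δ (j + 1)) * ∏ i ∈ Finset.Icc (j + 1) t, δ i * δ (i + 1)) •
            Q.mulVec
              (fun v => if v ∈ ((Finset.Icc j (t - 1)).inf S) \ S t then r j v else 0) := by
  set κ := (1 - α) / (1 + α) with hκ
  have hκ0 : 0 < κ := div_pos (by linarith) (by linarith)
  have hκ1 : κ ≤ 1 := (div_le_one (by linarith)).2 (by linarith)
  have hκδ1 : δ 1 ≤ 1 := hδ1 ▸ hκ1
  have hδrec' : ∀ t, 1 ≤ t → δ (t + 1) = (2 / κ - δ t)⁻¹ := by
    simpa only [hκ, div_div_eq_mul_div] using hδrec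
  simp only [Finset.ite_mem_eq_indicator] at hx1 hxupd ⊢
  intro t ht
  obtain ⟨s, rfl⟩ := Nat.exists_eq_add_of_le' ht
  rw [Nat.add_sub_cancel, residual_step hQ (two_mul_delta_succ hκ0 hκ1 hκδ1 hδrec' (s + 1) ht)
    (hr s) (hr (s + 1)) (hr (s + 1 + 1)) _ (hxupd (s + 1) ht),
    sub_eq_increment δ r S x hδ0 hx0 hx1 hxupd s, indicator_compl_increment]
  simp only [mulVec_sum, mulVec_smul, coeff]

/-- Residual recursion of the local Chebyshev method. -/
theorem locCH_residual_recursion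
    {V : Type*} [Fintype V] [DecidableEq V] [Nonempty V]
    (A : Matrix V V ℝ) (hsym : A.IsSymm)
    (h01 : ∀ u v, A u v = 0 ∨ A u v = 1)
    (hdiag : ∀ u, A u u = 0)
    (d : V → ℝ) (hd : ∀ u, d u = ∑ v, A u v)
    (hdpos : ∀ u, 0 < d u)
    (α : ℝ) (hα0 : 0 < α) (hα1 : α < 1)
    (W : Matrix V V ℝ)
    (hW : ∀ v w, W v w = A v w / (Real.sqrt (d v) * Real.sqrt (d w)))
    (Q : Matrix V V ℝ) (hQ : Q = 1 - ((1 - α) / (1 + α)) • W)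
    (δ : ℕ → ℝ) (hδ0 : δ 0 = 0) (hδ1 : δ 1 = (1 - α) / (1 + α))
    (hδrec : ∀ t, 1 ≤ t → δ (t + 1) = (2 * (1 + α) / (1 - α) - δ t)⁻¹)
    (b : V → ℝ) (x r : ℕ → V → ℝ)
    (hr : ∀ t, r t = b - Q.mulVec (x t))
    (S : ℕ → Finset V) (hS0 : ∀ v, v ∈ S 0 ↔ r 0 v ≠ 0)
    (hx0 : x 0 = 0)
    (hx1 : x 1 = fun v => if v ∈ S 0 then r 0 v else 0)
    (hxupd : ∀ t, 1 ≤ t → x (t + 1) = x t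
        + (1 + δ t * δ (t + 1)) • (fun v => if v ∈ S t then r t v else 0)
        + (δ t * δ (t + 1)) • (fun v => if v ∈ S t then x t v - x (t - 1) v else 0)) :
    ∀ t, 1 ≤ t →
      r (t + 1) - (2 * δ (t + 1)) • W.mulVec (r t) + (δ t * δ (t + 1)) • r (t - 1) =
        ∑ j ∈ Finset.range (t + 1),
          ((1 + δ j * δ (j + 1)) * ∏ i ∈ Finset.Icc (j + 1) t, δ i * δ (i + 1)) •
            Q.mulVec
              (fun v => if v ∈ ((Finset.Icc j (t - 1)).inf S) \ S t then r j v else 0) :=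
  locCH_residual_recursion_general α hα0 hα1 W Q hQ δ hδ0 hδ1 hδrec b x r hr S hx0 hx1 hxupd
end

section
/- Perturbed Chebyshev comparison bound: Let δ_1 = (1-α)/(1+α), δ_{t+1} = (2(1+α)/(1-α) - δ_t)^{-1}, and write δ_{j:t} = ∏_{i=j}^{t} δ_i. Let β_0, …, β_{T-1} ≥ 0 and let a_0, a_1, …, a_T be nonnegative reals satisfying a_t ≤ δ_{1:t} (1 + t β_0) a_0 + 2 Σ_{k=1}^{t-1} δ_{k+1:t} (t-k) β_k a_k for every t = 1, …, T. Then a_t ≤ δ_{1:t} · (∏_{j=0}^{t-1} (1 + β_j)) · y_t for every t = 1, …, T, where (y_t) is the solution of the recurrence y_{t+1} - 2 y_t + y_{t-1}/((1+β_{t-1})(1+β_t)) = 0 with initial values y_0 = y_1 = a_0. -/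
private lemma cheb_sum_identity (f : ℕ → ℝ) (t : ℕ) :
    ∑ k ∈ Finset.Ico 1 (t + 2), ((t : ℝ) + 2 - (k : ℝ)) * f k
      = 2 * ∑ k ∈ Finset.Ico 1 (t + 1), ((t : ℝ) + 1 - (k : ℝ)) * f k
        - ∑ k ∈ Finset.Ico 1 t, ((t : ℝ) - (k : ℝ)) * f k + f (t + 1) := by
  rw [Finset.sum_Ico_succ_top (by omega : 1 ≤ t + 1)]
  have h1 : ∑ k ∈ Finset.Ico 1 (t + 1), ((t : ℝ) + 2 - (k : ℝ)) * f k
      = 2 * ∑ k ∈ Finset.Ico 1 (t + 1), ((t : ℝ) + 1 - (k : ℝ)) * f k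
        - ∑ k ∈ Finset.Ico 1 (t + 1), ((t : ℝ) - (k : ℝ)) * f k := by
    rw [Finset.mul_sum, ← Finset.sum_sub_distrib]
    exact Finset.sum_congr rfl (fun k _ => by ring)
  have h2 : ∑ k ∈ Finset.Ico 1 (t + 1), ((t : ℝ) - (k : ℝ)) * f k
      = ∑ k ∈ Finset.Ico 1 t, ((t : ℝ) - (k : ℝ)) * f k := by
    rcases Nat.eq_zero_or_pos t with h | h
    · subst h; simp
    · rw [Finset.sum_Ico_succ_top (by omega : 1 ≤ t)]
      simp
  rw [h1, h2]
  push_cast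
  ring

/-- Perturbed Chebyshev comparison bound. -/
theorem perturbed_chebyshev_comparison_bound
    (α : ℝ) (hα0 : 0 < α) (hα1 : α < 1)
    (δ : ℕ → ℝ) (hδ1 : δ 1 = (1 - α) / (1 + α))
    (hδrec : ∀ t, 1 ≤ t → δ (t + 1) = (2 * (1 + α) / (1 - α) - δ t)⁻¹)
    (T : ℕ) (β : ℕ → ℝ) (hβ : ∀ t < T, 0 ≤ β t)
    (a : ℕ → ℝ) (ha : ∀ t ≤ T, 0 ≤ a t)
    (hrec : ∀ t, 1 ≤ t → t ≤ T →
      a t ≤ (∏ i ∈ Finset.Icc 1 t, δ i) * (1 + (t : ℝ) * β 0) * a 0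
        + 2 * ∑ k ∈ Finset.Ico 1 t,
            (∏ i ∈ Finset.Icc (k + 1) t, δ i) * (((t : ℝ) - (k : ℝ)) * (β k * a k)))
    (y : ℕ → ℝ) (hy0 : y 0 = a 0) (hy1 : y 1 = a 0)
    (hyrec : ∀ t, 1 ≤ t →
      y (t + 1) - 2 * y t + y (t - 1) / ((1 + β (t - 1)) * (1 + β t)) = 0) :
    ∀ t, 1 ≤ t → t ≤ T →
      a t ≤ (∏ i ∈ Finset.Icc 1 t, δ i) * (∏ j ∈ Finset.range t, (1 + β j)) * y t := by
  have hA1 : (0:ℝ) < 1 - α := by linarith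
  have hA2 : (0:ℝ) < 1 + α := by linarith
  -- δ is in (0, 1]
  have hδpos : ∀ t, 1 ≤ t → 0 < δ t ∧ δ t ≤ 1 := by
    intro t ht
    induction t, ht using Nat.le_induction with
    | base =>
      rw [hδ1]
      constructor
      · positivity
      · rw [div_le_one hA2]; linarith
    | succ n hn ih =>
      have h2 : (2:ℝ) < 2 * (1 + α) / (1 - α) := by
        rw [lt_div_iff₀ hA1]; nlinarith
      have hD : (1:ℝ) < 2 * (1 + α) / (1 - α) - δ n := by linarith [ih.2]
      rw [hδrec n hn]
      constructor
      · exact inv_pos.mpr (by linarith)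
      · exact inv_le_one_of_one_le₀ hD.le
  have hΔpos : ∀ j t, 1 ≤ j → (0:ℝ) ≤ ∏ i ∈ Finset.Icc j t, δ i := by
    intro j t hj
    apply Finset.prod_nonneg
    intro i hi
    exact (hδpos i (le_trans hj (Finset.mem_Icc.mp hi).1)).1.le
  -- z t = B t * y t
  set z : ℕ → ℝ := fun t => (∏ j ∈ Finset.range t, (1 + β j)) * y t with hz
  set S : ℕ → ℝ := fun t =>
    (1 + (t : ℝ) * β 0) * a 0
      + 2 * ∑ k ∈ Finset.Ico 1 t, ((t : ℝ) - (k : ℝ)) * (β k * z k) with hS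
  -- z recurrence
  have hzrec : ∀ t, t + 2 ≤ T → z (t + 2) = 2 * (1 + β (t + 1)) * z (t + 1) - z t := by
    intro t ht
    have hb1 : (1 + β t) ≠ 0 := by have := hβ t (by omega); positivity
    have hb2 : (1 + β (t + 1)) ≠ 0 := by have := hβ (t + 1) (by omega); positivity
    have hy := hyrec (t + 1) (by omega)
    simp only [Nat.add_sub_cancel] at hy
    have hyv : y (t + 2) = 2 * y (t + 1) - y t / ((1 + β t) * (1 + β (t + 1))) := by
      linarith
    simp only [hz, Finset.prod_range_succ, hyv]
    field_simp
  -- z = S up to T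
  have hkey : ∀ t, t + 1 ≤ T → z t = S t ∧ z (t + 1) = S (t + 1) := by
    intro t
    induction t with
    | zero =>
      intro _
      constructor
      · simp [hz, hS, hy0]
      · simp [hz, hS, hy1, Finset.prod_range_one]
    | succ n ih =>
      intro hn
      have ihc := ih (by omega)
      refine ⟨ihc.2, ?_⟩
      have hzr := hzrec n (by omega)
      have hSsum := cheb_sum_identity (fun k => β k * z k) n
      rw [hzr, ihc.1, ihc.2]
      simp only [hS]
      push_cast
      have hconv : ∑ x ∈ Finset.Ico 1 (n + 1 + 1), ((n:ℝ) + 1 + 1 - (x:ℝ)) * (β x * z x)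
          = ∑ k ∈ Finset.Ico 1 (n + 2), ((n:ℝ) + 2 - (k:ℝ)) * (β k * z k) := by
        apply Finset.sum_congr rfl
        intro k _
        ring
      rw [hconv, hSsum]
      have hzn1 : z (n + 1) = S (n + 1) := ihc.2
      simp only [hS] at hzn1
      push_cast at hzn1
      simp only [hz] at hzn1 ⊢
      linear_combination (-2:ℝ) * β (n + 1) * hzn1
  have hzS : ∀ t, 1 ≤ t → t ≤ T → z t = S t := by
    intro t ht hT
    obtain ⟨s, rfl⟩ : ∃ s, t = s + 1 := ⟨t - 1, by omega⟩
    exact (hkey s (by omega)).2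
  -- main strong induction
  intro t
  induction t using Nat.strong_induction_on with
  | _ t ih =>
    intro ht hT
    have hbound := hrec t ht hT
    have hterm : ∀ k ∈ Finset.Ico 1 t,
        (∏ i ∈ Finset.Icc (k + 1) t, δ i) * (((t : ℝ) - (k : ℝ)) * (β k * a k))
          ≤ (∏ i ∈ Finset.Icc 1 t, δ i) * (((t : ℝ) - (k : ℝ)) * (β k * z k)) := by
      intro k hk
      obtain ⟨hk1, hkt⟩ := Finset.mem_Ico.mp hk
      have hak : a k ≤ (∏ i ∈ Finset.Icc 1 k, δ i) * z k := by
        have := ih k hkt hk1 (le_trans hkt.le hT)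
        rw [mul_assoc] at this
        exact this
      have hβk : 0 ≤ β k := hβ k (lt_of_lt_of_le hkt hT)
      have htk : (0:ℝ) ≤ (t : ℝ) - (k : ℝ) := by
        have : (k:ℝ) ≤ t := by exact_mod_cast hkt.le
        linarith
      have hmerge : (∏ i ∈ Finset.Icc 1 k, δ i) * (∏ i ∈ Finset.Icc (k + 1) t, δ i)
          = ∏ i ∈ Finset.Icc 1 t, δ i := by
        rw [show Finset.Icc 1 k = Finset.Ioc 0 k from Finset.Icc_add_one_left_eq_Ioc 0 k,
            show Finset.Icc (k + 1) t = Finset.Ioc k t from Finset.Icc_add_one_left_eq_Ioc k t,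
            show Finset.Icc 1 t = Finset.Ioc 0 t from Finset.Icc_add_one_left_eq_Ioc 0 t]
        exact Finset.prod_Ioc_consecutive δ (Nat.zero_le k) hkt.le
      calc (∏ i ∈ Finset.Icc (k + 1) t, δ i) * (((t : ℝ) - (k : ℝ)) * (β k * a k))
          ≤ (∏ i ∈ Finset.Icc (k + 1) t, δ i) *
              (((t : ℝ) - (k : ℝ)) * (β k * ((∏ i ∈ Finset.Icc 1 k, δ i) * z k))) := by
            apply mul_le_mul_of_nonneg_left _ (hΔpos (k+1) t (by omega))
            apply mul_le_mul_of_nonneg_left _ htk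
            exact mul_le_mul_of_nonneg_left hak hβk
        _ = (∏ i ∈ Finset.Icc 1 t, δ i) * (((t : ℝ) - (k : ℝ)) * (β k * z k)) := by
            rw [← hmerge]; ring
    have hsum := Finset.sum_le_sum hterm
    have hmain : a t ≤ (∏ i ∈ Finset.Icc 1 t, δ i) * S t := by
      calc a t ≤ _ := hbound
        _ ≤ (∏ i ∈ Finset.Icc 1 t, δ i) * (1 + (t : ℝ) * β 0) * a 0
            + 2 * ∑ k ∈ Finset.Ico 1 t,
                (∏ i ∈ Finset.Icc 1 t, δ i) * (((t : ℝ) - (k : ℝ)) * (β k * z k)) := by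
            linarith
        _ = (∏ i ∈ Finset.Icc 1 t, δ i) * S t := by
            simp only [hS, ← Finset.mul_sum]
            ring
    rw [← hzS t ht hT] at hmain
    rw [mul_assoc]
    exact hmain
end

section
/- Residual recursion of the Heavy-Ball iteration: Let W be any real square matrix, α ∈ (0,1), α̃ = (1-√α)/(1+√α), Q = I - ((1-α)/(1+α)) W, b a vector, and r^{(t)} = b - Q x^{(t)}. If the iterates satisfy x^{(t+1)} = x^{(t)} + (1+α̃²) r^{(t)} + α̃² (x^{(t)} - x^{(t-1)}) for all t ≥ 1, then the residuals satisfy r^{(t+1)} = 2 α̃ W r^{(t)} - α̃² r^{(t-1)} for all t ≥ 1. -/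
/-- Residual recursion of the Heavy-Ball iteration. -/
theorem heavy_ball_residual_recursion
    {n : ℕ} (W : Matrix (Fin n) (Fin n) ℝ)
    (α : ℝ) (hα0 : 0 < α) (hα1 : α < 1)
    (atil : ℝ) (hatil : atil = (1 - Real.sqrt α) / (1 + Real.sqrt α))
    (Q : Matrix (Fin n) (Fin n) ℝ) (hQ : Q = 1 - ((1 - α) / (1 + α)) • W)
    (b : Fin n → ℝ) (x r : ℕ → Fin n → ℝ)
    (hr : ∀ t, r t = b - Q.mulVec (x t))
    (hx : ∀ t, 1 ≤ t →
      x (t + 1) = x t + (1 + atil ^ 2) • r t + atil ^ 2 • (x t - x (t - 1))) :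
    ∀ t, 1 ≤ t → r (t + 1) = (2 * atil) • W.mulVec (r t) - atil ^ 2 • r (t - 1) := by
  have hs0 : (0:ℝ) < Real.sqrt α := Real.sqrt_pos.mpr hα0
  have hs2 : Real.sqrt α ^ 2 = α := Real.sq_sqrt hα0.le
  have hsne : (1:ℝ) + Real.sqrt α ≠ 0 := by positivity
  have hαne : (1:ℝ) + α ≠ 0 := by positivity
  have key : (1 + atil ^ 2) * ((1 - α) / (1 + α)) = 2 * atil := by
    subst hatil
    field_simp
    nlinarith [hs2]
  intro t ht
  have h1 : Q.mulVec (r t) = r t - ((1 - α) / (1 + α)) • W.mulVec (r t) := by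
    rw [hQ, Matrix.sub_mulVec, Matrix.one_mulVec, Matrix.smul_mulVec]
  have h2 : Q.mulVec (x t) - Q.mulVec (x (t - 1)) = r (t - 1) - r t := by
    rw [hr t, hr (t - 1)]; abel
  have h3 : r (t + 1)
      = r t - (1 + atil ^ 2) • Q.mulVec (r t)
        - atil ^ 2 • (Q.mulVec (x t) - Q.mulVec (x (t - 1))) := by
    rw [hr (t + 1), hx t ht, Matrix.mulVec_add, Matrix.mulVec_add,
      Matrix.mulVec_smul, Matrix.mulVec_smul, Matrix.mulVec_sub, hr t]
    abel
  rw [h3, h1, h2]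
  match_scalars <;> first
    | linear_combination key
    | linear_combination -key
    | ring
end

section
/- Convergence of the Heavy-Ball residual recursion with ideal initialization: Let W be a real symmetric matrix whose eigenvalues all lie in [-1,1], let α ∈ (0,1) and α̃ = (1-√α)/(1+√α). If the vectors r^{(t)} satisfy r^{(1)} = α̃ W r^{(0)} and r^{(t+1)} = 2 α̃ W r^{(t)} - α̃² r^{(t-1)} for all t ≥ 1, then ‖r^{(t)}‖_2 ≤ α̃^t · ‖r^{(0)}‖_2 for every t ≥ 0. -/
/-! In an orthonormal eigenbasis of `W`, every coordinate of `r` obeys the scalar recurrence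
`c (t + 2) = 2 ã λ c (t + 1) - ã² c t` with `λ ∈ [-1, 1]`. Writing `λ = cos θ`, the solution is
`c t = ã ^ t cos (t θ) c 0` (a rescaled Chebyshev polynomial), so `|c t| ≤ ã ^ t |c 0|`
coordinatewise, and Parseval turns this into the norm bound. -/

open Real Module RealInnerProductSpace

theorem eq_pow_mul_cos_of_chebyshev_recurrence {a θ : ℝ} {u : ℕ → ℝ}
    (h1 : u 1 = a * cos θ * u 0)
    (hrec : ∀ t, u (t + 2) = 2 * a * cos θ * u (t + 1) - a ^ 2 * u t) (t : ℕ) :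
    u t = a ^ t * cos (t * θ) * u 0 := by
  induction t using Nat.twoStepInduction with
  | zero => simp
  | one => simp [h1]
  | more t ih ih' =>
    have hcos : cos ((t + 2 : ℕ) * θ) = 2 * cos θ * cos ((t + 1 : ℕ) * θ) - cos (t * θ) := by
      have h₁ : ((t + 2 : ℕ) : ℝ) * θ = (t + 1 : ℕ) * θ + θ := by push_cast; ring
      have h₂ : (t : ℝ) * θ = (t + 1 : ℕ) * θ - θ := by push_cast; ring
      rw [h₁, h₂, cos_add, cos_sub]
      ring
    rw [hrec, ih, ih', hcos]
    ring

theorem abs_le_pow_mul_of_chebyshev_recurrence {a x : ℝ} (hx : |x| ≤ 1) {u : ℕ → ℝ}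
    (h1 : u 1 = a * x * u 0)
    (hrec : ∀ t, u (t + 2) = 2 * a * x * u (t + 1) - a ^ 2 * u t) (t : ℕ) :
    |u t| ≤ |a| ^ t * |u 0| := by
  obtain ⟨hx₁, hx₂⟩ := abs_le.mp hx
  have hθ : cos (arccos x) = x := cos_arccos hx₁ hx₂
  rw [← hθ] at h1 hrec
  rw [eq_pow_mul_cos_of_chebyshev_recurrence h1 hrec, abs_mul, abs_mul, abs_pow]
  gcongr
  exact mul_le_of_le_one_right (by positivity) (abs_cos_le_one _)

namespace LinearMap.IsSymmetric

variable {E : Type*} [NormedAddCommGroup E] [InnerProductSpace ℝ E] [FiniteDimensional ℝ E]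
  {T : E →ₗ[ℝ] E} (hT : T.IsSymmetric) {n : ℕ} (hn : finrank ℝ E = n)

theorem inner_eigenvectorBasis_apply (i : Fin n) (v : E) :
    ⟪hT.eigenvectorBasis hn i, T v⟫ = hT.eigenvalues hn i * ⟪hT.eigenvectorBasis hn i, v⟫ := by
  rw [← hT, hT.apply_eigenvectorBasis, real_inner_smul_left]
  rfl

theorem abs_eigenvalues_le_one (hT1 : ∀ x, ‖T x‖ ≤ ‖x‖) (i : Fin n) :
    |hT.eigenvalues hn i| ≤ 1 := by
  simpa [hT.apply_eigenvectorBasis, norm_smul, (hT.eigenvectorBasis hn).norm_eq_one] using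
    hT1 (hT.eigenvectorBasis hn i)

end LinearMap.IsSymmetric

section

variable {E : Type*} [NormedAddCommGroup E] [InnerProductSpace ℝ E] [FiniteDimensional ℝ E]
  {T : E →ₗ[ℝ] E}

theorem norm_le_pow_mul_of_chebyshev_recurrence (hT : T.IsSymmetric) (hT1 : ∀ x, ‖T x‖ ≤ ‖x‖)
    {a : ℝ} {r : ℕ → E} (h1 : r 1 = a • T (r 0))
    (hrec : ∀ t, r (t + 2) = (2 * a) • T (r (t + 1)) - a ^ 2 • r t) (t : ℕ) :
    ‖r t‖ ≤ |a| ^ t * ‖r 0‖ := by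
  set b := hT.eigenvectorBasis rfl
  have hcoord : ∀ i, |⟪b i, r t⟫| ≤ |a| ^ t * |⟪b i, r 0⟫| := fun i =>
    abs_le_pow_mul_of_chebyshev_recurrence (u := fun t => ⟪b i, r t⟫)
      (hT.abs_eigenvalues_le_one rfl hT1 i)
      (by rw [h1, real_inner_smul_right, hT.inner_eigenvectorBasis_apply]; ring)
      (fun t => by
        rw [hrec, inner_sub_right, real_inner_smul_right, real_inner_smul_right,
          hT.inner_eigenvectorBasis_apply]
        ring) t
  have hsq : ‖r t‖ ^ 2 ≤ (|a| ^ t * ‖r 0‖) ^ 2 := by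
    rw [mul_pow, ← b.sum_sq_inner_right, ← b.sum_sq_inner_right, Finset.mul_sum]
    gcongr with i
    rw [← mul_pow, sq_le_sq, abs_mul, abs_pow, abs_abs]
    exact hcoord i
  exact le_of_pow_le_pow_left₀ two_ne_zero (by positivity) hsq

end

theorem EuclideanSpace.norm_toLp_eq_sqrt_sum_sq {ι : Type*} [Fintype ι] (x : ι → ℝ) :
    ‖WithLp.toLp 2 x‖ = √(∑ i, x i ^ 2) := by
  rw [← EuclideanSpace.real_norm_sq_eq, sqrt_sq (norm_nonneg _)]

theorem heavy_ball_ideal_convergence_general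
    {n : ℕ} (W : Matrix (Fin n) (Fin n) ℝ) (hsymm : W.IsSymm)
    (hW : ∀ x : Fin n → ℝ, (∑ i, (W.mulVec x i) ^ 2) ≤ ∑ i, (x i) ^ 2)
    (α : ℝ) (hα1 : α < 1)
    (atil : ℝ) (hatil : atil = (1 - Real.sqrt α) / (1 + Real.sqrt α))
    (r : ℕ → Fin n → ℝ)
    (hr1 : r 1 = atil • W.mulVec (r 0))
    (hrrec : ∀ t, 1 ≤ t →
      r (t + 1) = (2 * atil) • W.mulVec (r t) - atil ^ 2 • r (t - 1)) :
    ∀ t : ℕ, Real.sqrt (∑ i, (r t i) ^ 2) ≤ atil ^ t * Real.sqrt (∑ i, (r 0 i) ^ 2) := by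
  have hatil_nonneg : 0 ≤ atil :=
    hatil ▸ div_nonneg (sub_nonneg.mpr (Real.sqrt_le_one.mpr hα1.le)) (by positivity)
  have hT : W.toEuclideanLin.IsSymmetric :=
    Matrix.isSymmetric_toEuclideanLin_iff.mpr (Matrix.isHermitian_iff_isSymm.mpr hsymm)
  have hT1 (x : EuclideanSpace ℝ (Fin n)) : ‖W.toEuclideanLin x‖ ≤ ‖x‖ := by
    rw [← x.toLp_ofLp, Matrix.toLpLin_toLp, EuclideanSpace.norm_toLp_eq_sqrt_sum_sq,
      EuclideanSpace.norm_toLp_eq_sqrt_sum_sq]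
    exact sqrt_le_sqrt (hW _)
  intro t
  simpa only [EuclideanSpace.norm_toLp_eq_sqrt_sum_sq, abs_of_nonneg hatil_nonneg] using
    norm_le_pow_mul_of_chebyshev_recurrence hT hT1 (a := atil) (r := fun t => WithLp.toLp 2 (r t))
      (by simp [hr1, Matrix.toLpLin_toLp])
      (fun t => by simp [hrrec (t + 1), Matrix.toLpLin_toLp]) t

/-- Convergence of the Heavy-Ball residual recursion with ideal
initialization. -/
theorem heavy_ball_ideal_convergence
    {n : ℕ} (W : Matrix (Fin n) (Fin n) ℝ) (hsymm : W.IsSymm)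
    (hW : ∀ x : Fin n → ℝ, (∑ i, (W.mulVec x i) ^ 2) ≤ ∑ i, (x i) ^ 2)
    (α : ℝ) (hα0 : 0 < α) (hα1 : α < 1)
    (atil : ℝ) (hatil : atil = (1 - Real.sqrt α) / (1 + Real.sqrt α))
    (r : ℕ → Fin n → ℝ)
    (hr1 : r 1 = atil • W.mulVec (r 0))
    (hrrec : ∀ t, 1 ≤ t →
      r (t + 1) = (2 * atil) • W.mulVec (r t) - atil ^ 2 • r (t - 1)) :
    ∀ t : ℕ, Real.sqrt (∑ i, (r t i) ^ 2) ≤ atil ^ t * Real.sqrt (∑ i, (r 0 i) ^ 2) :=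
  heavy_ball_ideal_convergence_general W hsymm hW α hα1 atil hatil r hr1 hrrec
end
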